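/- arXiv:1304.7227 — 5 statements merged into one kernel-verified Lean document; each statement's English description precedes it below -/
import Mathlib

section
/- Let f be twice differentiable on an open interval containing [a,b] with f'' integrable, and suppose |f''|^q is convex on [a,b] for some q ≥ 1. Then |f((a+b)/2) − (1/(b−a))∫ₐᵇ f(x) dx| ≤ ((b−a)²/48)·(1/4)^{1/q}·{ (3|f''((a+b)/2)|^q + |f''(a)|^q)^{1/q} + (3|f''((a+b)/2)|^q + |f''(b)|^q)^{1/q} }·(1/4)^{−1/q}·(1/4)^{1/q}, i.e. |f((a+b)/2) − (1/(b−a))∫ₐᵇ f| ≤ ((b−a)²/48)·(1/4)^{1/q}·[(3|f''((a+b)/2)|^q + |f''(a)|^q)^{1/q} + (3|f''((a+b)/2)|^q + |f''(b)|^q)^{1/q}]. -/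
/-!
With `m = (a + b) / 2`, two integrations by parts on each half of `[a, b]` give
`f m - (1 / (b - a)) ∫ f = -(∫_a^m (x - a)² f'' + ∫_m^b (b - x)² f'') / (2 (b - a))`.
On `[a, m]` the weighted power-mean (Hölder) inequality
`∫ w |f''| ≤ (∫ w) ^ (1 - 1/q) (∫ w |f''| ^ q) ^ (1/q)` with `w = (x - a)²`, combined with the
chord bound for the convex function `|f''| ^ q`, yields `(m - a)³ / 3 · (1/4) ^ (1/q) ·
(3 |f'' m| ^ q + |f'' a| ^ q) ^ (1/q)`; the right half is the mirror image of the left one.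
-/

open MeasureTheory Set

theorem integral_mul_le_integral_rpow_mul_integral_mul_rpow {α : Type*} [MeasurableSpace α]
    {μ : Measure α} {w h : α → ℝ} {q : ℝ} (hq : 1 ≤ q) (hw : ∀ᵐ x ∂μ, 0 ≤ w x)
    (hh : ∀ᵐ x ∂μ, 0 ≤ h x) (hw_int : Integrable w μ) (hh_meas : AEStronglyMeasurable h μ)
    (hwh_int : Integrable (fun x => w x * h x ^ q) μ) :
    ∫ x, w x * h x ∂μ ≤ (∫ x, w x ∂μ) ^ (1 - 1 / q) * (∫ x, w x * h x ^ q ∂μ) ^ (1 / q) := by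
  obtain rfl | hq1 := hq.eq_or_lt
  · simp
  -- Hölder for `w * h = w ^ (1 / p) * (w ^ (1 / q) * h)`, `p` the conjugate exponent of `q`
  set p := q.conjExponent
  have hpq : p.HolderConjugate q := (Real.HolderConjugate.conjExponent hq1).symm
  have hF : ∀ᵐ x ∂μ, (w x ^ (1 / p)) ^ p = w x := by
    filter_upwards [hw] with x hx
    rw [← Real.rpow_mul hx, one_div_mul_cancel hpq.ne_zero, Real.rpow_one]
  have hG : ∀ᵐ x ∂μ, (w x ^ (1 / q) * h x) ^ q = w x * h x ^ q := by
    filter_upwards [hw, hh] with x hx hhx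
    rw [Real.mul_rpow (by positivity) hhx, ← Real.rpow_mul hx,
      one_div_mul_cancel hpq.symm.ne_zero, Real.rpow_one]
  have hFG : ∀ᵐ x ∂μ, w x ^ (1 / p) * (w x ^ (1 / q) * h x) = w x * h x := by
    filter_upwards [hw] with x hx
    rw [← mul_assoc, ← Real.rpow_add_of_nonneg hx (one_div_nonneg.2 hpq.nonneg)
      (one_div_nonneg.2 hpq.symm.nonneg),
      one_div, one_div, hpq.inv_add_inv_eq_one, Real.rpow_one]
  have hF_nonneg : ∀ᵐ x ∂μ, 0 ≤ w x ^ (1 / p) := by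
    filter_upwards [hw] with x hx using by positivity
  have hG_nonneg : ∀ᵐ x ∂μ, 0 ≤ w x ^ (1 / q) * h x := by
    filter_upwards [hw, hh] with x hx hhx using by positivity
  have hF_meas : AEStronglyMeasurable (fun x => w x ^ (1 / p)) μ :=
    (hw_int.1.aemeasurable.pow_const _).aestronglyMeasurable
  have hF_mem : MemLp (fun x => w x ^ (1 / p)) (ENNReal.ofReal p) μ := by
    refine (integrable_norm_rpow_iff hF_meas (by simp [hpq.pos]) (by simp)).1 ?_
    refine hw_int.congr ?_
    filter_upwards [hF, hF_nonneg] with x hx hx'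
    rw [ENNReal.toReal_ofReal hpq.nonneg, Real.norm_of_nonneg hx', hx]
  have hG_mem : MemLp (fun x => w x ^ (1 / q) * h x) (ENNReal.ofReal q) μ := by
    refine (integrable_norm_rpow_iff ((hw_int.1.aemeasurable.pow_const _).aestronglyMeasurable.mul
      hh_meas) (by simp [hpq.symm.pos]) (by simp)).1 ?_
    refine hwh_int.congr ?_
    filter_upwards [hG, hG_nonneg] with x hx hx'
    rw [ENNReal.toReal_ofReal hpq.symm.nonneg, Pi.mul_apply, Real.norm_of_nonneg hx', hx]
  have holder := integral_mul_le_Lp_mul_Lq_of_nonneg hpq hF_nonneg hG_nonneg hF_mem hG_mem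
  rwa [integral_congr_ae hFG, integral_congr_ae hF, integral_congr_ae hG, one_div p, one_div q,
    ← hpq.symm.one_sub_inv, ← one_div] at holder

theorem ConvexOn.le_of_mem_Icc {φ : ℝ → ℝ} {c d x : ℝ} (hφ : ConvexOn ℝ (Icc c d) φ)
    (hcd : c < d) (hx : x ∈ Icc c d) : φ x ≤ ((d - x) * φ c + (x - c) * φ d) / (d - c) := by
  have hdc : 0 < d - c := sub_pos.2 hcd
  have key := hφ.2 (left_mem_Icc.2 hcd.le) (right_mem_Icc.2 hcd.le)
    (div_nonneg (sub_nonneg.2 hx.2) hdc.le) (div_nonneg (sub_nonneg.2 hx.1) hdc.le)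
    (by field_simp; ring)
  have hcomb : (d - x) / (d - c) * c + (x - c) / (d - c) * d = x := by field_simp; ring
  simp only [smul_eq_mul, hcomb] at key
  exact key.trans_eq (by field_simp)

theorem ConvexOn.comp_reflect_Icc {φ : ℝ → ℝ} {c d : ℝ} (hφ : ConvexOn ℝ (Icc c d) φ) :
    ConvexOn ℝ (Icc c d) fun x => φ (c + d - x) := by
  have hmem : ∀ z ∈ Icc c d, c + d - z ∈ Icc c d :=
    fun z hz => ⟨by linarith [hz.2], by linarith [hz.1]⟩
  refine ⟨convex_Icc c d, fun x hx y hy a b ha hb hab => ?_⟩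
  convert hφ.2 (hmem x hx) (hmem y hy) ha hb hab using 2
  simp only [smul_eq_mul]
  linear_combination -(c + d) * hab

theorem integral_sq_sub_mul_affine (c d A D : ℝ) :
    ∫ x in c..d, (x - c) ^ 2 * ((d - x) * A + (x - c) * D) = (d - c) ^ 4 / 12 * (3 * D + A) := by
  have h : ∀ x, (x - c) ^ 2 * ((d - x) * A + (x - c) * D) =
      (d - c) * A * (x - c) ^ 2 + (D - A) * (x - c) ^ 3 := fun x => by ring
  simp only [h]
  rw [intervalIntegral.integral_add (Continuous.intervalIntegrable (by fun_prop) _ _)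
      (Continuous.intervalIntegrable (by fun_prop) _ _), intervalIntegral.integral_const_mul,
    intervalIntegral.integral_const_mul, intervalIntegral.integral_comp_sub_right (· ^ 2),
    intervalIntegral.integral_comp_sub_right (· ^ 3), integral_pow, integral_pow]
  ring

theorem abs_integral_sq_sub_mul_le {g : ℝ → ℝ} {c d q : ℝ} (hcd : c < d) (hq : 1 ≤ q)
    (hg : IntervalIntegrable g volume c d) (hconv : ConvexOn ℝ (Icc c d) fun x => |g x| ^ q) :
    |∫ x in c..d, (x - c) ^ 2 * g x| ≤
      (d - c) ^ 3 / 3 * (1 / 4 : ℝ) ^ (1 / q) * (3 * |g d| ^ q + |g c| ^ q) ^ (1 / q) := by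
  set A := |g c| ^ q
  set D := |g d| ^ q
  set μ := volume.restrict (Ioc c d)
  have hIoc : ∀ᵐ x ∂μ, x ∈ Icc c d := by
    filter_upwards [ae_restrict_mem measurableSet_Ioc] with x hx using Ioc_subset_Icc_self hx
  have hmajor : Integrable (fun x => (x - c) ^ 2 * (((d - x) * A + (x - c) * D) / (d - c))) μ :=
    Continuous.integrableOn_Ioc (by fun_prop)
  have hpointwise : ∀ᵐ x ∂μ,
      (x - c) ^ 2 * |g x| ^ q ≤ (x - c) ^ 2 * (((d - x) * A + (x - c) * D) / (d - c)) := by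
    filter_upwards [hIoc] with x hx
    exact mul_le_mul_of_nonneg_left (hconv.le_of_mem_Icc hcd hx) (sq_nonneg _)
  have hg_meas : AEStronglyMeasurable (fun x => |g x|) μ := hg.1.aestronglyMeasurable.norm
  have hmoment_int : Integrable (fun x => (x - c) ^ 2 * |g x| ^ q) μ := by
    refine hmajor.mono' ((Continuous.aestronglyMeasurable (by fun_prop)).mul
      (hg_meas.aemeasurable.pow_const q).aestronglyMeasurable) ?_
    filter_upwards [hpointwise] with x hx
    rwa [Real.norm_of_nonneg (by positivity)]
  have hmoment : ∫ x, (x - c) ^ 2 * |g x| ^ q ∂μ ≤ (d - c) ^ 3 / 3 * (1 / 4 * (3 * D + A)) := by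
    refine (integral_mono_ae hmoment_int hmajor hpointwise).trans_eq ?_
    rw [← intervalIntegral.integral_of_le hcd.le]
    simp_rw [mul_div_assoc']
    rw [intervalIntegral.integral_div, integral_sq_sub_mul_affine]
    field_simp
    ring
  have hweight : ∫ x, (x - c) ^ 2 ∂μ = (d - c) ^ 3 / 3 := by
    rw [← intervalIntegral.integral_of_le hcd.le, intervalIntegral.integral_comp_sub_right (· ^ 2),
      integral_pow]
    ring
  have holder := integral_mul_le_integral_rpow_mul_integral_mul_rpow hq
    (Filter.Eventually.of_forall fun x => sq_nonneg (x - c))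
    (Filter.Eventually.of_forall fun x => abs_nonneg (g x))
    (Continuous.integrableOn_Ioc (by fun_prop)) hg_meas hmoment_int
  have hK : 0 < (d - c) ^ 3 / 3 := by positivity
  calc |∫ x in c..d, (x - c) ^ 2 * g x|
      ≤ ∫ x in c..d, (x - c) ^ 2 * |g x| := by
        refine (intervalIntegral.abs_integral_le_integral_abs hcd.le).trans_eq ?_
        simp_rw [abs_mul, abs_sq]
    _ ≤ ((d - c) ^ 3 / 3) ^ (1 - 1 / q) * ((d - c) ^ 3 / 3 * (1 / 4 * (3 * D + A))) ^ (1 / q) := by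
        rw [intervalIntegral.integral_of_le hcd.le]
        refine (holder.trans_eq (by rw [hweight])).trans
          (mul_le_mul_of_nonneg_left ?_ (by positivity))
        exact Real.rpow_le_rpow (integral_nonneg fun x => by positivity) hmoment (by positivity)
    _ = (d - c) ^ 3 / 3 * (1 / 4 : ℝ) ^ (1 / q) * (3 * D + A) ^ (1 / q) := by
        rw [Real.mul_rpow hK.le (by positivity), Real.mul_rpow (by norm_num) (by positivity),
          ← mul_assoc, ← mul_assoc, ← Real.rpow_add hK, sub_add_cancel, Real.rpow_one]

theorem abs_integral_sub_sq_mul_le {g : ℝ → ℝ} {c d q : ℝ} (hcd : c < d) (hq : 1 ≤ q)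
    (hg : IntervalIntegrable g volume c d) (hconv : ConvexOn ℝ (Icc c d) fun x => |g x| ^ q) :
    |∫ x in c..d, (d - x) ^ 2 * g x| ≤
      (d - c) ^ 3 / 3 * (1 / 4 : ℝ) ^ (1 / q) * (3 * |g c| ^ q + |g d| ^ q) ^ (1 / q) := by
  have hg' : IntervalIntegrable (fun x => g (c + d - x)) volume c d := by
    simpa using (hg.comp_sub_left (c + d)).symm
  have h := abs_integral_sq_sub_mul_le hcd hq hg' hconv.comp_reflect_Icc
  have hsubst : ∫ x in c..d, (x - c) ^ 2 * g (c + d - x) = ∫ x in c..d, (d - x) ^ 2 * g x := by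
    have hx : ∀ x, x - c = d - (c + d - x) := fun x => by ring
    simp_rw [hx]
    simpa using intervalIntegral.integral_comp_sub_left (a := c) (b := d)
      (fun x => (d - x) ^ 2 * g x) (c + d)
  rwa [hsubst, add_sub_cancel_right, add_sub_cancel_left] at h

theorem integral_sq_sub_mul_second_deriv {f f' f'' : ℝ → ℝ} {c d e : ℝ}
    (hf : ∀ x ∈ uIcc c d, HasDerivAt f (f' x) x) (hf' : ∀ x ∈ uIcc c d, HasDerivAt f' (f'' x) x)
    (hf'' : IntervalIntegrable f'' volume c d) :
    ∫ x in c..d, (x - e) ^ 2 * f'' x =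
      (d - e) ^ 2 * f' d - (c - e) ^ 2 * f' c - 2 * ((d - e) * f d - (c - e) * f c)
        + 2 * ∫ x in c..d, f x := by
  have hf'_cont : ContinuousOn f' (uIcc c d) :=
    fun x hx => (hf' x hx).continuousAt.continuousWithinAt
  rw [intervalIntegral.integral_mul_deriv_eq_deriv_mul (u' := fun x => 2 * (x - e))
      (fun x _ => by simpa using ((hasDerivAt_id x).sub_const e).fun_pow 2) hf'
      (Continuous.intervalIntegrable (by fun_prop) _ _) hf'',
    intervalIntegral.integral_mul_deriv_eq_deriv_mul (u' := fun _ => 2)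
      (fun x _ => by simpa using ((hasDerivAt_id x).sub_const e).const_mul 2) hf
      intervalIntegrable_const hf'_cont.intervalIntegrable,
    intervalIntegral.integral_const_mul]
  ring

theorem midpoint_sub_average_eq {f f' f'' : ℝ → ℝ} {a b : ℝ} (hab : a < b)
    (hf : ∀ x ∈ Icc a b, HasDerivAt f (f' x) x) (hf' : ∀ x ∈ Icc a b, HasDerivAt f' (f'' x) x)
    (hf'' : IntervalIntegrable f'' volume a b) :
    f ((a + b) / 2) - 1 / (b - a) * ∫ x in a..b, f x =
      -((∫ x in a..(a + b) / 2, (x - a) ^ 2 * f'' x) + ∫ x in (a + b) / 2..b, (b - x) ^ 2 * f'' x)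
        / (2 * (b - a)) := by
  set m := (a + b) / 2 with hm
  have ham : a ≤ m := by linarith
  have hmb : m ≤ b := by linarith
  have hleft : uIcc a m ⊆ Icc a b := by
    rw [uIcc_of_le ham]; exact Icc_subset_Icc le_rfl hmb
  have hright : uIcc m b ⊆ Icc a b := by
    rw [uIcc_of_le hmb]; exact Icc_subset_Icc ham le_rfl
  have hf_int : IntervalIntegrable f volume a b :=
    ContinuousOn.intervalIntegrable_of_Icc hab.le
      fun x hx => (hf x hx).continuousAt.continuousWithinAt
  have hsplit := intervalIntegral.integral_add_adjacent_intervals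
    (hf_int.mono_set (uIcc_of_le hab.le ▸ hleft)) (hf_int.mono_set (uIcc_of_le hab.le ▸ hright))
  simp_rw [sub_sq_comm b]
  rw [integral_sq_sub_mul_second_deriv (fun x hx => hf x (hleft hx)) (fun x hx => hf' x (hleft hx))
      (hf''.mono_set (uIcc_of_le hab.le ▸ hleft)),
    integral_sq_sub_mul_second_deriv (fun x hx => hf x (hright hx))
      (fun x hx => hf' x (hright hx)) (hf''.mono_set (uIcc_of_le hab.le ▸ hright)), ← hsplit, hm]
  field_simp [(sub_pos.2 hab).ne']
  ring

theorem stmt_7 (f f' f'' : ℝ → ℝ) (a b q : ℝ) (hab : a < b) (hq : 1 ≤ q)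
    (hf' : ∀ x ∈ Set.Icc a b, HasDerivAt f (f' x) x)
    (hf'' : ∀ x ∈ Set.Icc a b, HasDerivAt f' (f'' x) x)
    (hint : IntervalIntegrable f'' MeasureTheory.volume a b)
    (hconv : ∀ x ∈ Set.Icc a b, ∀ y ∈ Set.Icc a b, ∀ t ∈ Set.Icc (0:ℝ) 1,
      |f'' (t * x + (1 - t) * y)| ^ q ≤ t * |f'' x| ^ q + (1 - t) * |f'' y| ^ q) :
    |f ((a + b) / 2) - (1 / (b - a)) * ∫ u in a..b, f u| ≤
      (b - a) ^ 2 / 48 * (1 / 4 : ℝ) ^ (1 / q) *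
        ((3 * |f'' ((a + b) / 2)| ^ q + |f'' a| ^ q) ^ (1 / q)
          + (3 * |f'' ((a + b) / 2)| ^ q + |f'' b| ^ q) ^ (1 / q)) := by
  have ham : a < (a + b) / 2 := by linarith
  have hmb : (a + b) / 2 < b := by linarith
  have hconvOn : ConvexOn ℝ (Icc a b) fun x => |f'' x| ^ q := by
    refine ⟨convex_Icc a b, fun x hx y hy s t hs ht hst => ?_⟩
    obtain rfl : t = 1 - s := by linarith
    exact hconv x hx y hy s ⟨hs, by linarith⟩
  have hleft := abs_integral_sq_sub_mul_le ham hq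
    (hint.mono_set (by simp only [uIcc_of_le, ham.le, hab.le]; exact Icc_subset_Icc le_rfl hmb.le))
    (hconvOn.subset (Icc_subset_Icc le_rfl hmb.le) (convex_Icc _ _))
  have hright := abs_integral_sub_sq_mul_le hmb hq
    (hint.mono_set (by simp only [uIcc_of_le, hmb.le, hab.le]; exact Icc_subset_Icc ham.le le_rfl))
    (hconvOn.subset (Icc_subset_Icc ham.le le_rfl) (convex_Icc _ _))
  rw [midpoint_sub_average_eq hab hf' hf'' hint, abs_div, abs_neg,
    abs_of_pos (by linarith : 0 < 2 * (b - a)), div_le_iff₀ (by linarith)]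
  refine (abs_add_le _ _).trans ((add_le_add hleft hright).trans_eq ?_)
  ring
end

section
/- Let f be twice differentiable on an open interval containing [a,b] with |f''|^q convex for some q ≥ 1 (a < b). Then the midpoint-trapezoid bound holds: |(f(a)+f(b))/2 − (1/(b−a))∫ₐᵇ f(x) dx| ≤ ((b−a)²/16)·(2/3)^{1−1/q}·{ [(5/12)|f''((a+b)/2)|^q + (1/4)|f''(a)|^q]^{1/q} + [(5/12)|f''((a+b)/2)|^q + (1/4)|f''(b)|^q]^{1/q} }. -/
/-!
Integrating by parts twice writes the trapezoid error as
`(1 / (2 (b - a))) ∫ₐᵇ (x - a)(b - x) f''(x) dx`. Split this integral at the midpoint `m`; on the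
half ending at `e ∈ {a, b}`, the substitution `x = s m + (1 - s) e` turns the kernel into
`((b - a) / 2)² s (2 - s)`. Hölder's inequality with weight `s (2 - s)` on `[0, 1]`, whose total
mass is `2/3`, and the convexity bound `|f''(x)|^q ≤ s |f''(m)|^q + (1 - s) |f''(e)|^q`, whose
weighted integral is `5/12 |f''(m)|^q + 1/4 |f''(e)|^q`, bound each half.
-/

open MeasureTheory Set

theorem integral_sub_mul_sub_mul_second_deriv {f f' f'' : ℝ → ℝ} {a b : ℝ}
    (hf' : ∀ x ∈ uIcc a b, HasDerivAt f (f' x) x) (hf'' : ∀ x ∈ uIcc a b, HasDerivAt f' (f'' x) x)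
    (hint : IntervalIntegrable f'' volume a b) :
    ∫ x in a..b, (x - a) * (b - x) * f'' x = (b - a) * (f a + f b) - 2 * ∫ x in a..b, f x := by
  have hw : ∀ x ∈ uIcc a b, HasDerivAt (fun x ↦ (x - a) * (b - x)) (a + b - 2 * x) x :=
    fun x _ ↦ (((hasDerivAt_id x).sub_const a).mul ((hasDerivAt_id x).const_sub b)).congr_deriv
      (by simp only [id_eq]; ring)
  have hw' : ∀ x ∈ uIcc a b, HasDerivAt (fun x ↦ a + b - 2 * x) (-2) x :=
    fun x _ ↦ (((hasDerivAt_id x).const_mul 2).const_sub (a + b)).congr_deriv (by ring)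
  have hf'_int : IntervalIntegrable f' volume a b :=
    ContinuousOn.intervalIntegrable fun x hx ↦ (hf'' x hx).continuousAt.continuousWithinAt
  rw [intervalIntegral.integral_mul_deriv_eq_deriv_mul hw hf''
      (Continuous.intervalIntegrable (by fun_prop) a b) hint,
    intervalIntegral.integral_mul_deriv_eq_deriv_mul hw' hf' intervalIntegrable_const hf'_int,
    intervalIntegral.integral_const_mul]
  ring

theorem integral_mul_abs_le_holder_weighted {α : Type*} [MeasurableSpace α] {μ : Measure α}
    {w g : α → ℝ} {q : ℝ} (hq : 1 ≤ q) (hw0 : 0 ≤ᵐ[μ] w) (hw : Integrable w μ)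
    (hg : AEStronglyMeasurable g μ) (hwg : Integrable (fun x ↦ w x * |g x| ^ q) μ) :
    ∫ x, w x * |g x| ∂μ ≤ (∫ x, w x ∂μ) ^ (1 - 1 / q) * (∫ x, w x * |g x| ^ q ∂μ) ^ (1 / q) := by
  obtain rfl | hq1 := hq.eq_or_lt
  · simp
  set p := q.conjExponent
  have hpq : p.HolderConjugate q := (Real.HolderConjugate.conjExponent hq1).symm
  have hp : 1 / p = 1 - 1 / q := by rw [one_div, one_div, ← hpq.one_sub_inv]; ring
  set F := fun x ↦ |w x| ^ (1 / p)
  set G := fun x ↦ |w x| ^ (1 / q) * |g x|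
  have hF_pow : ∀ x, F x ^ p = |w x| := fun x ↦ by
    rw [← Real.rpow_mul (abs_nonneg _), one_div_mul_cancel hpq.ne_zero, Real.rpow_one]
  have hG_pow : ∀ x, G x ^ q = |w x| * |g x| ^ q := fun x ↦ by
    rw [Real.mul_rpow (by positivity) (abs_nonneg _), ← Real.rpow_mul (abs_nonneg _),
      one_div_mul_cancel hpq.symm.ne_zero, Real.rpow_one]
  have hFG : ∀ x, F x * G x = |w x| * |g x| := fun x ↦ by
    rw [← mul_assoc, ← Real.rpow_add' (abs_nonneg _) (by rw [hp]; simp), hp, sub_add_cancel,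
      Real.rpow_one]
  have hFm : AEStronglyMeasurable F μ := hw.1.norm.aemeasurable.pow_const _ |>.aestronglyMeasurable
  have hGm : AEStronglyMeasurable G μ :=
    (hw.1.norm.aemeasurable.pow_const _).mul hg.norm.aemeasurable |>.aestronglyMeasurable
  have hF : MemLp F (ENNReal.ofReal p) μ := by
    refine (integrable_norm_rpow_iff hFm (by simpa using hpq.pos) ENNReal.ofReal_ne_top).1 ?_
    rw [ENNReal.toReal_ofReal hpq.nonneg]
    refine hw.norm.congr (ae_of_all _ fun x ↦ ?_)
    simp only [Real.norm_eq_abs, abs_of_nonneg (Real.rpow_nonneg (abs_nonneg _) _), hF_pow, F]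
  have hG : MemLp G (ENNReal.ofReal q) μ := by
    refine (integrable_norm_rpow_iff hGm (by simpa using hpq.symm.pos) ENNReal.ofReal_ne_top).1 ?_
    rw [ENNReal.toReal_ofReal hpq.symm.nonneg]
    refine hwg.congr (hw0.mono fun x hx ↦ ?_)
    simp only [Real.norm_eq_abs, abs_of_nonneg (by positivity : 0 ≤ G x), hG_pow, abs_of_nonneg hx]
  have key := integral_mul_le_Lp_mul_Lq_of_nonneg hpq (ae_of_all _ fun x ↦ by positivity)
    (ae_of_all _ fun x ↦ by positivity) hF hG
  simp only [hFG, hF_pow, hG_pow, hp] at key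
  have hw_abs : ∀ᵐ x ∂μ, |w x| = w x := hw0.mono fun x hx ↦ abs_of_nonneg hx
  have h_abs_mul : ∀ h : α → ℝ, ∫ x, |w x| * h x ∂μ = ∫ x, w x * h x ∂μ := fun h ↦
    integral_congr_ae (hw_abs.mono fun x hx ↦ by simp only [hx])
  rwa [h_abs_mul, h_abs_mul, integral_congr_ae hw_abs] at key

theorem integral_mul_two_sub_mul_affine (A B : ℝ) :
    ∫ x in (0:ℝ)..1, x * (2 - x) * (x * A + (1 - x) * B) = 5 / 12 * A + 1 / 4 * B := by
  have h : ∀ x ∈ uIcc (0:ℝ) 1, HasDerivAt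
      (fun x : ℝ ↦ B * x ^ 2 + (2 * A - 3 * B) / 3 * x ^ 3 + (B - A) / 4 * x ^ 4)
      (x * (2 - x) * (x * A + (1 - x) * B)) x := fun x _ ↦
    ((((hasDerivAt_pow 2 x).const_mul B).add
      ((hasDerivAt_pow 3 x).const_mul ((2 * A - 3 * B) / 3))).add
      ((hasDerivAt_pow 4 x).const_mul ((B - A) / 4))).congr_deriv (by norm_num; ring)
  rw [intervalIntegral.integral_eq_sub_of_hasDerivAt h (by apply Continuous.intervalIntegrable; fun_prop)]
  norm_num; ring

theorem integral_mul_two_sub : ∫ x in (0:ℝ)..1, x * (2 - x) = 2 / 3 := by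
  have h := integral_mul_two_sub_mul_affine 1 1
  norm_num at h
  exact h

theorem abs_integral_mul_two_sub_mul_le {G : ℝ → ℝ} {q : ℝ} (hq : 1 ≤ q)
    (hG : IntervalIntegrable G volume 0 1)
    (hconv : ∀ s ∈ Icc (0:ℝ) 1, |G s| ^ q ≤ s * |G 1| ^ q + (1 - s) * |G 0| ^ q) :
    |∫ s in (0:ℝ)..1, s * (2 - s) * G s| ≤
      (2 / 3) ^ (1 - 1 / q) * (5 / 12 * |G 1| ^ q + 1 / 4 * |G 0| ^ q) ^ (1 / q) := by
  set A := |G 1| ^ q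
  set B := |G 0| ^ q
  have hw0 : ∀ s ∈ Icc (0:ℝ) 1, 0 ≤ s * (2 - s) := fun s hs ↦
    mul_nonneg hs.1 (by linarith [hs.2])
  have h_maj : ∀ s ∈ Icc (0:ℝ) 1, s * (2 - s) * |G s| ^ q ≤ s * (2 - s) * (s * A + (1 - s) * B) :=
    fun s hs ↦ mul_le_mul_of_nonneg_left (hconv s hs) (hw0 s hs)
  have h_maj_int : IntervalIntegrable (fun s ↦ s * (2 - s) * (s * A + (1 - s) * B)) volume 0 1 := by
    apply Continuous.intervalIntegrable; fun_prop
  have hwG_meas : AEStronglyMeasurable (fun s ↦ s * (2 - s) * |G s| ^ q)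
      (volume.restrict (Ioc 0 1)) :=
    ((by fun_prop : Continuous fun s : ℝ ↦ s * (2 - s)).aemeasurable.mul
      (hG.1.aemeasurable.abs.pow_const q)).aestronglyMeasurable
  have hwG_int : IntervalIntegrable (fun s ↦ s * (2 - s) * |G s| ^ q) volume 0 1 := by
    refine h_maj_int.mono_fun' (by simpa using hwG_meas) ?_
    rw [uIoc_of_le zero_le_one]
    filter_upwards [ae_restrict_mem measurableSet_Ioc] with s hs
    have hs' := Ioc_subset_Icc_self hs
    rw [Real.norm_eq_abs, abs_of_nonneg (mul_nonneg (hw0 s hs') (by positivity))]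
    exact h_maj s hs'
  have h_holder : ∫ s in (0:ℝ)..1, s * (2 - s) * |G s| ≤
      (∫ s in (0:ℝ)..1, s * (2 - s)) ^ (1 - 1 / q) *
        (∫ s in (0:ℝ)..1, s * (2 - s) * |G s| ^ q) ^ (1 / q) := by
    simp only [intervalIntegral.integral_of_le zero_le_one]
    refine integral_mul_abs_le_holder_weighted hq ?_ ?_ hG.1.aestronglyMeasurable hwG_int.1
    · filter_upwards [ae_restrict_mem measurableSet_Ioc] with s hs
      exact hw0 s (Ioc_subset_Icc_self hs)
    · exact (Continuous.intervalIntegrable (by fun_prop) 0 1).1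
  calc |∫ s in (0:ℝ)..1, s * (2 - s) * G s|
      ≤ ∫ s in (0:ℝ)..1, s * (2 - s) * |G s| := by
        refine (intervalIntegral.abs_integral_le_integral_abs zero_le_one).trans_eq
          (intervalIntegral.integral_congr fun s hs ↦ ?_)
        rw [uIcc_of_le zero_le_one] at hs
        simp only [abs_mul, abs_of_nonneg (hw0 s hs)]
    _ ≤ (2 / 3) ^ (1 - 1 / q) * (∫ s in (0:ℝ)..1, s * (2 - s) * |G s| ^ q) ^ (1 / q) :=
        integral_mul_two_sub ▸ h_holder
    _ ≤ (2 / 3) ^ (1 - 1 / q) * (5 / 12 * A + 1 / 4 * B) ^ (1 / q) := by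
        gcongr
        · exact intervalIntegral.integral_nonneg zero_le_one fun s hs ↦
            mul_nonneg (hw0 s hs) (by positivity)
        · exact (intervalIntegral.integral_mono_on zero_le_one hwG_int h_maj_int h_maj).trans_eq
            (integral_mul_two_sub_mul_affine A B)

theorem integral_sub_mul_two_mul_sub_sub_mul_eq {c d : ℝ} (hcd : c ≠ d) (g : ℝ → ℝ) :
    ∫ x in c..d, (x - c) * (2 * d - c - x) * g x =
      (d - c) ^ 3 * ∫ s in (0:ℝ)..1, s * (2 - s) * g (s * d + (1 - s) * c) := by
  have hdc : d - c ≠ 0 := sub_ne_zero.2 hcd.symm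
  have h := intervalIntegral.integral_comp_mul_add (a := 0) (b := 1)
    (fun x ↦ (x - c) * (2 * d - c - x) * g x) hdc c
  rw [mul_zero, zero_add, mul_one, sub_add_cancel, smul_eq_mul] at h
  have h_integrand : ∀ s : ℝ, ((d - c) * s + c - c) * (2 * d - c - ((d - c) * s + c)) *
      g ((d - c) * s + c) = (d - c) ^ 2 * (s * (2 - s) * g (s * d + (1 - s) * c)) := fun s ↦ by
    rw [show (d - c) * s + c = s * d + (1 - s) * c by ring]
    ring
  simp only [h_integrand, intervalIntegral.integral_const_mul] at h
  rw [eq_inv_mul_iff_mul_eq₀ hdc] at h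
  rw [← h]
  ring

theorem abs_integral_sub_mul_two_mul_sub_sub_mul_le {g : ℝ → ℝ} {c d q : ℝ} (hcd : c ≠ d)
    (hq : 1 ≤ q) (hg : IntervalIntegrable g volume c d)
    (hconv : ∀ t ∈ Icc (0:ℝ) 1, |g (t * d + (1 - t) * c)| ^ q ≤ t * |g d| ^ q + (1 - t) * |g c| ^ q) :
    |∫ x in c..d, (x - c) * (2 * d - c - x) * g x| ≤
      |d - c| ^ 3 * ((2 / 3) ^ (1 - 1 / q) * (5 / 12 * |g d| ^ q + 1 / 4 * |g c| ^ q) ^ (1 / q)) := by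
  have hG : IntervalIntegrable (fun s ↦ g (s * d + (1 - s) * c)) volume 0 1 := by
    have h := (hg.comp_add_right c).comp_mul_left (c := d - c)
    simp only [sub_self, zero_div, div_self (sub_ne_zero.2 hcd.symm)] at h
    exact h.congr fun s _ ↦ congrArg g (by ring)
  rw [integral_sub_mul_two_mul_sub_sub_mul_eq hcd, abs_mul, abs_pow]
  gcongr
  simpa using abs_integral_mul_two_sub_mul_le hq hG (by simpa using hconv)

theorem integral_sub_mul_sub_mul_eq_sub {g : ℝ → ℝ} {a b : ℝ}
    (hg : IntervalIntegrable g volume a b) :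
    ∫ x in a..b, (x - a) * (b - x) * g x =
      (∫ x in a..(a + b) / 2, (x - a) * (2 * ((a + b) / 2) - a - x) * g x) -
        ∫ x in b..(a + b) / 2, (x - b) * (2 * ((a + b) / 2) - b - x) * g x := by
  have hm : (a + b) / 2 ∈ uIcc a b := by
    rcases le_total a b with h | h
    · exact Icc_subset_uIcc ⟨by linarith, by linarith⟩
    · exact Icc_subset_uIcc' ⟨by linarith, by linarith⟩
  have hK : IntervalIntegrable (fun x ↦ (x - a) * (b - x) * g x) volume a b :=
    hg.continuousOn_mul (by fun_prop)
  rw [← intervalIntegral.integral_add_adjacent_intervals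
      (hK.mono_set (uIcc_subset_uIcc_left hm)) (hK.mono_set (uIcc_subset_uIcc_right hm)),
    intervalIntegral.integral_symm b, ← sub_eq_add_neg]
  congr 1 <;> exact intervalIntegral.integral_congr fun x _ ↦ by ring

theorem abs_integral_sub_mul_sub_mul_le {g : ℝ → ℝ} {a b q : ℝ} (hab : a < b) (hq : 1 ≤ q)
    (hg : IntervalIntegrable g volume a b)
    (hconv : ∀ x ∈ Icc a b, ∀ y ∈ Icc a b, ∀ t ∈ Icc (0:ℝ) 1,
      |g (t * x + (1 - t) * y)| ^ q ≤ t * |g x| ^ q + (1 - t) * |g y| ^ q) :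
    |∫ x in a..b, (x - a) * (b - x) * g x| ≤
      ((b - a) / 2) ^ 3 * (2 / 3) ^ (1 - 1 / q) *
        ((5 / 12 * |g ((a + b) / 2)| ^ q + 1 / 4 * |g a| ^ q) ^ (1 / q) +
          (5 / 12 * |g ((a + b) / 2)| ^ q + 1 / 4 * |g b| ^ q) ^ (1 / q)) := by
  have hm : (a + b) / 2 ∈ Icc a b := ⟨by linarith, by linarith⟩
  have hL := abs_integral_sub_mul_two_mul_sub_sub_mul_le (by linarith : a ≠ (a + b) / 2) hq
    (hg.mono_set (uIcc_subset_uIcc_left (Icc_subset_uIcc hm)))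
    (hconv _ hm a (left_mem_Icc.2 hab.le))
  have hR := abs_integral_sub_mul_two_mul_sub_sub_mul_le (by linarith : b ≠ (a + b) / 2) hq
    (hg.symm.mono_set (uIcc_subset_uIcc_left (Icc_subset_uIcc' hm)))
    (hconv _ hm b (right_mem_Icc.2 hab.le))
  have h_half : |(a + b) / 2 - a| = (b - a) / 2 := by rw [abs_of_pos] <;> linarith
  rw [h_half] at hL
  rw [abs_sub_comm, show b - (a + b) / 2 = (a + b) / 2 - a by ring, h_half] at hR
  rw [integral_sub_mul_sub_mul_eq_sub hg]
  refine (abs_sub _ _).trans ((add_le_add hL hR).trans_eq ?_)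
  ring

theorem stmt_8 (f f' f'' : ℝ → ℝ) (a b q : ℝ) (hab : a < b) (hq : 1 ≤ q)
    (hf' : ∀ x ∈ Set.Icc a b, HasDerivAt f (f' x) x)
    (hf'' : ∀ x ∈ Set.Icc a b, HasDerivAt f' (f'' x) x)
    (hint : IntervalIntegrable f'' MeasureTheory.volume a b)
    (hconv : ∀ x ∈ Set.Icc a b, ∀ y ∈ Set.Icc a b, ∀ t ∈ Set.Icc (0:ℝ) 1,
      |f'' (t * x + (1 - t) * y)| ^ q ≤ t * |f'' x| ^ q + (1 - t) * |f'' y| ^ q) :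
    |(f a + f b) / 2 - (1 / (b - a)) * ∫ u in a..b, f u| ≤
      (b - a) ^ 2 / 16 * (2 / 3 : ℝ) ^ (1 - 1 / q) *
        (((5 / 12) * |f'' ((a + b) / 2)| ^ q + (1 / 4) * |f'' a| ^ q) ^ (1 / q)
          + ((5 / 12) * |f'' ((a + b) / 2)| ^ q + (1 / 4) * |f'' b| ^ q) ^ (1 / q)) := by
  rw [← uIcc_of_le hab.le] at hf' hf''
  have hba : 0 < b - a := sub_pos.2 hab
  have h_error : (f a + f b) / 2 - (1 / (b - a)) * ∫ u in a..b, f u =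
      (∫ x in a..b, (x - a) * (b - x) * f'' x) / (2 * (b - a)) := by
    rw [integral_sub_mul_sub_mul_second_deriv hf' hf'' hint]
    field_simp
  rw [h_error, abs_div, abs_of_pos (by positivity : 0 < 2 * (b - a))]
  calc _ ≤ ((b - a) / 2) ^ 3 * (2 / 3) ^ (1 - 1 / q) *
          ((5 / 12 * |f'' ((a + b) / 2)| ^ q + 1 / 4 * |f'' a| ^ q) ^ (1 / q) +
            (5 / 12 * |f'' ((a + b) / 2)| ^ q + 1 / 4 * |f'' b| ^ q) ^ (1 / q)) / (2 * (b - a)) := by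
        gcongr
        exact abs_integral_sub_mul_sub_mul_le hab hq hint hconv
    _ = _ := by field_simp; ring
end

section
/- Let f be twice differentiable on an open interval containing [a,b] (a < b) with |f''|^q convex for some q ≥ 1. Then the Simpson-type inequality holds: |(1/6)[f(a) + 4f((a+b)/2) + f(b)] − (1/(b−a))∫ₐᵇ f(x) dx| ≤ ((b−a)²/162)·(81/8)^{1/q}·{ [φ₂·|f''((a+b)/2)|^q + φ₃·|f''(a)|^q]^{1/q} + [φ₂·|f''((a+b)/2)|^q + φ₃·|f''(b)|^q]^{1/q} }, where φ₂ = φ₂(1,1/3,1) = ∫₀¹ t²|2/3 − t| dt and φ₃ = φ₃(1,1/3,1) = ∫₀¹ t(1−t)|2/3 − t| dt. -/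
open MeasureTheory Set intervalIntegral

lemma aux_holder (w g : ℝ → ℝ) (q M : ℝ) (hq : 1 ≤ q)
    (hw : Continuous w) (hw0 : ∀ t ∈ Set.Icc (0:ℝ) 1, 0 ≤ w t)
    (hw1 : ∀ t ∈ Set.Icc (0:ℝ) 1, w t ≤ 1)
    (hg : IntervalIntegrable g MeasureTheory.volume 0 1)
    (hg0 : ∀ t, 0 ≤ g t) (hgM : ∀ t ∈ Set.Icc (0:ℝ) 1, g t ≤ M) :
    ∫ t in (0:ℝ)..1, w t * g t ≤
      (∫ t in (0:ℝ)..1, w t) ^ (1 - 1/q) * (∫ t in (0:ℝ)..1, w t * g t ^ q) ^ (1/q) := by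
  rcases eq_or_lt_of_le hq with rfl | hq1
  · simp only [one_div, inv_one, sub_self, Real.rpow_zero, Real.rpow_one, one_mul]
    apply le_of_eq
    refine intervalIntegral.integral_congr fun t ht => ?_
    simp [Real.rpow_one]
  · set p : ℝ := q / (q - 1) with hp
    have hq0 : 0 < q := by linarith
    have hpq : p.HolderConjugate q := by
      rw [Real.holderConjugate_iff]; constructor
      · rw [hp]; rw [lt_div_iff₀ (by linarith)]; linarith
      · rw [hp]; field_simp; ring
    have hμ : ∀ F : ℝ → ℝ, (∫ t in (0:ℝ)..1, F t) = ∫ t in Set.Ioc (0:ℝ) 1, F t := by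
      intro F; rw [intervalIntegral.integral_of_le (by norm_num)]
    have hp0 : 0 < p := hpq.pos
    -- measure
    set μ : Measure ℝ := volume.restrict (Set.Ioc (0:ℝ) 1) with hμdef
    have hfin : IsFiniteMeasure μ := by
      constructor
      rw [hμdef, Measure.restrict_apply_univ]
      simp [Real.volume_Ioc]
    have hIcc : Set.Ioc (0:ℝ) 1 ⊆ Set.Icc 0 1 := Set.Ioc_subset_Icc_self
    have hwmp : Measurable (fun t => w t ^ (1/p)) :=
      ((Real.continuous_rpow_const (by positivity)).comp hw).measurable
    have hwmq : Measurable (fun t => w t ^ (1/q)) :=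
      ((Real.continuous_rpow_const (by positivity)).comp hw).measurable
    have hwm : AEStronglyMeasurable (fun t => w t ^ (1/p)) μ := hwmp.aestronglyMeasurable
    have hgm : AEStronglyMeasurable g μ := hg.1.aestronglyMeasurable
    have hF1 : MemLp (fun t => w t ^ (1/p)) (ENNReal.ofReal p) μ := by
      apply MemLp.of_bound hwm 1
      rw [hμdef, ae_restrict_iff' measurableSet_Ioc]
      filter_upwards with t ht
      have h0 := hw0 t (hIcc ht); have h1 := hw1 t (hIcc ht)
      rw [Real.norm_eq_abs, abs_of_nonneg (Real.rpow_nonneg h0 _)]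
      exact Real.rpow_le_one h0 h1 (by positivity)
    have hF2 : MemLp (fun t => w t ^ (1/q) * g t) (ENNReal.ofReal q) μ := by
      apply MemLp.of_bound (hwmq.aestronglyMeasurable.mul hgm) M
      rw [hμdef, ae_restrict_iff' measurableSet_Ioc]
      filter_upwards with t ht
      have h0 := hw0 t (hIcc ht); have h1 := hw1 t (hIcc ht)
      simp only [Pi.mul_apply]
      rw [Real.norm_eq_abs, abs_of_nonneg (mul_nonneg (Real.rpow_nonneg h0 _) (hg0 t))]
      calc w t ^ (1/q) * g t ≤ 1 * g t := by
            apply mul_le_mul_of_nonneg_right _ (hg0 t)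
            exact Real.rpow_le_one h0 h1 (by positivity)
        _ = g t := one_mul _
        _ ≤ M := hgM t (hIcc ht)
    have key := MeasureTheory.integral_mul_le_Lp_mul_Lq_of_nonneg hpq
      (f := fun t => w t ^ (1/p)) (g := fun t => w t ^ (1/q) * g t)
      ?_ ?_ hF1 hF2
    · have hsum : 1/p + 1/q = 1 := by
        rw [one_div, one_div]; exact hpq.inv_add_inv_eq_one
      have h1p : 1 - 1/q = 1/p := by linarith
      rw [hμ (fun t => w t * g t), hμ w, hμ (fun t => w t * g t ^ q), h1p]
      have e1 : (∫ t, w t * g t ∂μ) = ∫ t, (w t ^ (1/p)) * (w t ^ (1/q) * g t) ∂μ := by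
        rw [hμdef]
        refine (setIntegral_congr_fun measurableSet_Ioc fun t ht => ?_).symm
        have h0 := hw0 t (hIcc ht)
        rw [← mul_assoc, ← Real.rpow_add' h0 (by rw [hsum]; norm_num), hsum, Real.rpow_one]
      have e2 : (∫ t, (w t ^ (1/p)) ^ p ∂μ) = ∫ t, w t ∂μ := by
        rw [hμdef]
        refine setIntegral_congr_fun measurableSet_Ioc fun t ht => ?_
        rw [← Real.rpow_mul (hw0 t (hIcc ht)), one_div, inv_mul_cancel₀ hpq.ne_zero,
          Real.rpow_one]
      have e3 : (∫ t, (w t ^ (1/q) * g t) ^ q ∂μ) = ∫ t, w t * g t ^ q ∂μ := by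
        rw [hμdef]
        refine setIntegral_congr_fun measurableSet_Ioc fun t ht => ?_
        have h0 := hw0 t (hIcc ht)
        rw [Real.mul_rpow (Real.rpow_nonneg h0 _) (hg0 t), ← Real.rpow_mul h0, one_div,
          inv_mul_cancel₀ (ne_of_gt hq0), Real.rpow_one]
      calc (∫ t, w t * g t ∂μ) = ∫ t, (w t ^ (1/p)) * (w t ^ (1/q) * g t) ∂μ := e1
        _ ≤ (∫ t, (w t ^ (1/p)) ^ p ∂μ) ^ (1/p) * (∫ t, (w t ^ (1/q) * g t) ^ q ∂μ) ^ (1/q) :=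
            key
        _ = (∫ t, w t ∂μ) ^ (1/p) * (∫ t, w t * g t ^ q ∂μ) ^ (1/q) := by rw [e2, e3]
    · filter_upwards [MeasureTheory.ae_restrict_mem measurableSet_Ioc] with t ht
      exact Real.rpow_nonneg (hw0 t (hIcc ht)) _
    · filter_upwards [MeasureTheory.ae_restrict_mem measurableSet_Ioc] with t ht
      exact mul_nonneg (Real.rpow_nonneg (hw0 t (hIcc ht)) _) (hg0 t)

open MeasureTheory Set intervalIntegral

lemma aux_ibp (f f' f'' : ℝ → ℝ) (lo hi c m : ℝ)
    (hf' : ∀ x ∈ Set.Icc lo hi, HasDerivAt f (f' x) x)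
    (hf'' : ∀ x ∈ Set.Icc lo hi, HasDerivAt f' (f'' x) x)
    (hmem : ∀ t ∈ Set.Icc (0:ℝ) 1, t * m + (1 - t) * c ∈ Set.Icc lo hi)
    (hint : IntervalIntegrable (fun t => f'' (t * m + (1 - t) * c)) MeasureTheory.volume 0 1) :
    ∫ t in (0:ℝ)..1, (t ^ 2 - 2/3 * t) * (f'' (t * m + (1 - t) * c) * (m - c) * (m - c)) =
      (1/3) * (f' m * (m - c)) - (4/3) * f m - (2/3) * f c
        + 2 * ∫ t in (0:ℝ)..1, f (t * m + (1 - t) * c) := by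
  have huIcc : Set.uIcc (0:ℝ) 1 = Set.Icc 0 1 := Set.uIcc_of_le (by norm_num)
  have haff : ∀ t : ℝ, HasDerivAt (fun s : ℝ => s * m + (1 - s) * c) (m - c) t := by
    intro t
    have heq : (fun s : ℝ => s * m + (1 - s) * c) = fun s => (m - c) * s + c := by
      funext s; ring
    rw [heq]
    simpa using ((hasDerivAt_id t).const_mul (m - c)).add_const c
  have hF : ∀ t ∈ Set.Icc (0:ℝ) 1,
      HasDerivAt (fun s => f (s * m + (1 - s) * c)) (f' (t * m + (1 - t) * c) * (m - c)) t :=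
    fun t ht => (hf' _ (hmem t ht)).comp t (haff t)
  have hF' : ∀ t ∈ Set.Icc (0:ℝ) 1,
      HasDerivAt (fun s => f' (s * m + (1 - s) * c) * (m - c))
        (f'' (t * m + (1 - t) * c) * (m - c) * (m - c)) t :=
    fun t ht => ((hf'' _ (hmem t ht)).comp t (haff t)).mul_const (m - c)
  have hp1 : ∀ t : ℝ, HasDerivAt (fun s : ℝ => s ^ 2 - 2/3 * s) (2 * t - 2/3) t := by
    intro t
    have := (hasDerivAt_pow 2 t).sub ((hasDerivAt_id t).const_mul (2/3 : ℝ))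
    simp at this; exact this
  have hp2 : ∀ t : ℝ, HasDerivAt (fun s : ℝ => 2 * s - 2/3) (2 : ℝ) t := by
    intro t
    simpa using ((hasDerivAt_id t).const_mul (2 : ℝ)).sub_const (2/3 : ℝ)
  have hcont1 : IntervalIntegrable (fun t : ℝ => 2 * t - 2/3) MeasureTheory.volume 0 1 :=
    (by continuity : Continuous fun t : ℝ => 2 * t - 2/3).intervalIntegrable 0 1
  have hcontF' : ContinuousOn (fun t : ℝ => f' (t * m + (1 - t) * c) * (m - c))
      (Set.uIcc (0:ℝ) 1) := by
    rw [huIcc]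
    exact fun t ht => ((hF' t ht).continuousAt).continuousWithinAt
  have ibp1 := intervalIntegral.integral_mul_deriv_eq_deriv_mul_of_hasDerivWithinAt
    (a := (0:ℝ)) (b := 1)
    (u := fun t => t ^ 2 - 2/3 * t) (u' := fun t => 2 * t - 2/3)
    (v := fun t => f' (t * m + (1 - t) * c) * (m - c))
    (v' := fun t => f'' (t * m + (1 - t) * c) * (m - c) * (m - c))
    (fun x hx => (hp1 x).hasDerivWithinAt)
    (fun x hx => (hF' x (huIcc ▸ hx)).hasDerivWithinAt)
    hcont1
    ((hint.mul_const (m - c)).mul_const (m - c))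
  have ibp2 := intervalIntegral.integral_mul_deriv_eq_deriv_mul_of_hasDerivWithinAt
    (a := (0:ℝ)) (b := 1)
    (u := fun t => 2 * t - 2/3) (u' := fun _ => (2:ℝ))
    (v := fun t => f (t * m + (1 - t) * c))
    (v' := fun t => f' (t * m + (1 - t) * c) * (m - c))
    (fun x hx => (hp2 x).hasDerivWithinAt)
    (fun x hx => (hF x (huIcc ▸ hx)).hasDerivWithinAt)
    (intervalIntegrable_const)
    (hcontF'.intervalIntegrable)
  rw [ibp1, ibp2]
  rw [intervalIntegral.integral_const_mul]
  norm_num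
  ring

-- value of the weight integral
lemma aux_W : (∫ t in (0:ℝ)..1, t * |2/3 - t|) = 8/81 := by
  have hc : Continuous fun t : ℝ => t * |2/3 - t| := by continuity
  have hi1 : IntervalIntegrable (fun t : ℝ => t * |2/3 - t|) MeasureTheory.volume 0 (2/3) :=
    hc.intervalIntegrable _ _
  have hi2 : IntervalIntegrable (fun t : ℝ => t * |2/3 - t|) MeasureTheory.volume (2/3) 1 :=
    hc.intervalIntegrable _ _
  rw [← intervalIntegral.integral_add_adjacent_intervals hi1 hi2]
  have e1 : (∫ t in (0:ℝ)..(2/3), t * |2/3 - t|) = ∫ t in (0:ℝ)..(2/3), (2/3 * t - t^2) := by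
    refine intervalIntegral.integral_congr fun t ht => ?_
    rw [Set.uIcc_of_le (by norm_num)] at ht
    rw [abs_of_nonneg (by linarith [ht.2])]
    ring
  have e2 : (∫ t in (2/3:ℝ)..1, t * |2/3 - t|) = ∫ t in (2/3:ℝ)..1, (t^2 - 2/3 * t) := by
    refine intervalIntegral.integral_congr fun t ht => ?_
    rw [Set.uIcc_of_le (by norm_num)] at ht
    rw [abs_of_nonpos (by linarith [ht.1])]
    ring
  rw [e1, e2,
    intervalIntegral.integral_sub ((by continuity : Continuous fun t : ℝ => 2/3 * t).intervalIntegrable _ _)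
      ((by continuity : Continuous fun t : ℝ => t^2).intervalIntegrable _ _),
    intervalIntegral.integral_sub ((by continuity : Continuous fun t : ℝ => t^2).intervalIntegrable _ _)
      ((by continuity : Continuous fun t : ℝ => 2/3 * t).intervalIntegrable _ _),
    intervalIntegral.integral_const_mul, intervalIntegral.integral_const_mul,
    integral_id, integral_pow]
  norm_num

set_option maxHeartbeats 1000000 in
theorem stmt_9 (f f' f'' : ℝ → ℝ) (a b q : ℝ) (hab : a < b) (hq : 1 ≤ q)
    (hf' : ∀ x ∈ Set.Icc a b, HasDerivAt f (f' x) x)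
    (hf'' : ∀ x ∈ Set.Icc a b, HasDerivAt f' (f'' x) x)
    (hint : IntervalIntegrable f'' MeasureTheory.volume a b)
    (hconv : ∀ x ∈ Set.Icc a b, ∀ y ∈ Set.Icc a b, ∀ t ∈ Set.Icc (0:ℝ) 1,
      |f'' (t * x + (1 - t) * y)| ^ q ≤ t * |f'' x| ^ q + (1 - t) * |f'' y| ^ q) :
    |(1 / 6) * (f a + 4 * f ((a + b) / 2) + f b) - (1 / (b - a)) * ∫ u in a..b, f u| ≤
      (b - a) ^ 2 / 162 * (81 / 8 : ℝ) ^ (1 / q) *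
        (((∫ t in (0:ℝ)..1, t ^ 2 * |2 / 3 - t|) * |f'' ((a + b) / 2)| ^ q
            + (∫ t in (0:ℝ)..1, t * (1 - t) * |2 / 3 - t|) * |f'' a| ^ q) ^ (1 / q)
          + ((∫ t in (0:ℝ)..1, t ^ 2 * |2 / 3 - t|) * |f'' ((a + b) / 2)| ^ q
            + (∫ t in (0:ℝ)..1, t * (1 - t) * |2 / 3 - t|) * |f'' b| ^ q) ^ (1 / q)) := by
  have hq0 : (0:ℝ) < q := by linarith
  have hba : (0:ℝ) < b - a := sub_pos.mpr hab
  have hne : b - a ≠ 0 := hba.ne'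
  set m : ℝ := (a + b) / 2 with hm
  have hma : m - a = (b - a) / 2 := by rw [hm]; ring
  have hmb : m - b = -((b - a) / 2) := by rw [hm]; ring
  have ham : a ∈ Set.Icc a b := Set.left_mem_Icc.mpr hab.le
  have hbm : b ∈ Set.Icc a b := Set.right_mem_Icc.mpr hab.le
  have hmm : m ∈ Set.Icc a b := by constructor <;> (rw [hm]; linarith)
  have hmem_a : ∀ t ∈ Set.Icc (0:ℝ) 1, t * m + (1 - t) * a ∈ Set.Icc a b := by
    intro t ht
    constructor
    · nlinarith [mul_nonneg ht.1 hba.le]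
    · nlinarith [mul_nonneg (sub_nonneg.mpr ht.2) hba.le]
  have hmem_b : ∀ t ∈ Set.Icc (0:ℝ) 1, t * m + (1 - t) * b ∈ Set.Icc a b := by
    intro t ht
    constructor
    · nlinarith [mul_nonneg (sub_nonneg.mpr ht.2) hba.le]
    · nlinarith [mul_nonneg ht.1 hba.le]
  -- integrability of the composed second derivative on the two legs
  have hint_a : IntervalIntegrable (fun t => f'' (t * m + (1 - t) * a))
      MeasureTheory.volume 0 1 := by
    have h1 := (hint.comp_add_right a).comp_mul_left (c := (b - a) / 2)
    rw [show a - a = (0:ℝ) by ring] at h1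
    have hhalf : (b - a) / 2 ≠ 0 := by positivity
    rw [show (0:ℝ) / ((b - a)/2) = 0 by ring, show (b - a) / ((b - a)/2) = 2 by
      rw [div_eq_iff hhalf]; ring] at h1
    have h2 := h1.mono_set (by
      rw [Set.uIcc_of_le (by norm_num : (0:ℝ) ≤ 1), Set.uIcc_of_le (by norm_num : (0:ℝ) ≤ 2)]
      exact Set.Icc_subset_Icc le_rfl (by norm_num))
    have heq : (fun x : ℝ => f'' ((b - a) / 2 * x + a)) =
        fun t => f'' (t * m + (1 - t) * a) := by
      funext t; congr 1; rw [hm]; ring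
    rwa [heq] at h2
  have hint_b : IntervalIntegrable (fun t => f'' (t * m + (1 - t) * b))
      MeasureTheory.volume 0 1 := by
    have h1 := (hint.comp_add_right b).comp_mul_left (c := (a - b) / 2)
    rw [show b - b = (0:ℝ) by ring] at h1
    have hhalf : (a - b) / 2 ≠ 0 := by
      simp only [ne_eq, div_eq_zero_iff, sub_eq_zero]
      push_neg
      exact ⟨hab.ne, by norm_num⟩
    rw [show (a - b) / ((a - b)/2) = 2 by rw [div_eq_iff hhalf]; ring,
      show (0:ℝ) / ((a - b)/2) = 0 by ring] at h1
    have h2 := h1.symm.mono_set (by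
      rw [Set.uIcc_of_le (by norm_num : (0:ℝ) ≤ 1), Set.uIcc_of_le (by norm_num : (0:ℝ) ≤ 2)]
      exact Set.Icc_subset_Icc le_rfl (by norm_num))
    have heq : (fun x : ℝ => f'' ((a - b) / 2 * x + b)) =
        fun t => f'' (t * m + (1 - t) * b) := by
      funext t; congr 1; rw [hm]; ring
    rwa [heq] at h2
  -- integration by parts identities
  have hJa := aux_ibp f f' f'' a b a m hf' hf'' hmem_a hint_a
  have hJb := aux_ibp f f' f'' a b b m hf' hf'' hmem_b hint_b
  have hcf : ContinuousOn f (Set.Icc a b) := fun x hx =>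
    (hf' x hx).continuousAt.continuousWithinAt
  have hi_am : IntervalIntegrable f MeasureTheory.volume a m := by
    apply ContinuousOn.intervalIntegrable
    apply hcf.mono
    rw [Set.uIcc_of_le (by rw [hm]; linarith)]
    exact Set.Icc_subset_Icc le_rfl hmm.2
  have hi_mb : IntervalIntegrable f MeasureTheory.volume m b := by
    apply ContinuousOn.intervalIntegrable
    apply hcf.mono
    rw [Set.uIcc_of_le (by rw [hm]; linarith)]
    exact Set.Icc_subset_Icc hmm.1 le_rfl
  have hsplit := intervalIntegral.integral_add_adjacent_intervals hi_am hi_mb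
  have hIa : (∫ t in (0:ℝ)..1, f (t * m + (1 - t) * a))
      = ((b - a)/2)⁻¹ * ∫ x in a..m, f x := by
    have heq : (fun t : ℝ => f (t * m + (1 - t) * a)) = fun t => f ((m - a) * t + a) := by
      funext t; congr 1; ring
    rw [heq, intervalIntegral.integral_comp_mul_add f (by rw [hma]; positivity) a,
      show (m - a) * 0 + a = a by ring, show (m - a) * 1 + a = m by ring, hma, smul_eq_mul]
  have hIb : (∫ t in (0:ℝ)..1, f (t * m + (1 - t) * b))
      = ((b - a)/2)⁻¹ * ∫ x in m..b, f x := by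
    have hne2 : m - b ≠ 0 := by rw [hmb]; simp; positivity
    have heq : (fun t : ℝ => f (t * m + (1 - t) * b)) = fun t => f ((m - b) * t + b) := by
      funext t; congr 1; ring
    rw [heq, intervalIntegral.integral_comp_mul_add f hne2 b,
      show (m - b) * 0 + b = b by ring, show (m - b) * 1 + b = m by ring,
      intervalIntegral.integral_symm, hmb, smul_eq_mul, inv_neg]
    ring
  set Ja := ∫ t in (0:ℝ)..1, (t ^ 2 - 2/3 * t) * (f'' (t * m + (1 - t) * a) * (m - a) * (m - a))
    with hJadef
  set Jb := ∫ t in (0:ℝ)..1, (t ^ 2 - 2/3 * t) * (f'' (t * m + (1 - t) * b) * (m - b) * (m - b))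
    with hJbdef
  have hId : (1 / 6) * (f a + 4 * f m + f b) - (1 / (b - a)) * (∫ u in a..b, f u)
      = -(1/4) * (Ja + Jb) := by
    rw [← hsplit, hJa, hJb, hIa, hIb, hma, hmb]
    field_simp
    ring
  -- bound for |f''| on [a,b]
  set M : ℝ := max |f'' a| |f'' b| with hM
  have hM0 : 0 ≤ M := le_trans (abs_nonneg _) (le_max_left _ _)
  have hbd : ∀ z ∈ Set.Icc a b, |f'' z| ≤ M := by
    intro z hz
    have ht : (z - a)/(b - a) ∈ Set.Icc (0:ℝ) 1 :=
      ⟨div_nonneg (by linarith [hz.1]) hba.le, (div_le_one hba).mpr (by linarith [hz.2])⟩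
    have hz' : (z - a)/(b - a) * b + (1 - (z - a)/(b - a)) * a = z := by
      field_simp
      ring
    have h1 := hconv b hbm a ham _ ht
    rw [hz'] at h1
    by_contra hlt
    push_neg at hlt
    have h2 : M ^ q < |f'' z| ^ q := Real.rpow_lt_rpow hM0 hlt hq0
    have h3 : |f'' b| ^ q ≤ M ^ q := Real.rpow_le_rpow (abs_nonneg _) (le_max_right _ _) hq0.le
    have h4 : |f'' a| ^ q ≤ M ^ q := Real.rpow_le_rpow (abs_nonneg _) (le_max_left _ _) hq0.le
    set t := (z - a)/(b - a)
    have h5 : t * |f'' b| ^ q + (1 - t) * |f'' a| ^ q ≤ M ^ q := by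
      have h6 := mul_le_mul_of_nonneg_left h3 ht.1
      have h7 := mul_le_mul_of_nonneg_left h4 (by linarith [ht.2] : (0:ℝ) ≤ 1 - t)
      nlinarith
    linarith
  -- weight facts
  have hwc : Continuous (fun t : ℝ => t * |2/3 - t|) :=
    continuous_id.mul (continuous_const.sub continuous_id).abs
  have hw0 : ∀ t ∈ Set.Icc (0:ℝ) 1, 0 ≤ t * |2/3 - t| :=
    fun t ht => mul_nonneg ht.1 (abs_nonneg _)
  have hw1 : ∀ t ∈ Set.Icc (0:ℝ) 1, t * |2/3 - t| ≤ 1 := by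
    intro t ht
    have h1 : |2/3 - t| ≤ 1 := abs_le.mpr ⟨by linarith [ht.2], by linarith [ht.1]⟩
    nlinarith [ht.1, ht.2, abs_nonneg (2/3 - t)]
  -- the per-leg Hölder + convexity bound
  have leg : ∀ c, c ∈ Set.Icc a b →
      ∀ _hintc : IntervalIntegrable (fun t => f'' (t * m + (1 - t) * c))
        MeasureTheory.volume 0 1,
      (∀ t ∈ Set.Icc (0:ℝ) 1, t * m + (1 - t) * c ∈ Set.Icc a b) →
      (∫ t in (0:ℝ)..1, t * |2/3 - t| * |f'' (t * m + (1 - t) * c)|) ≤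
        (8/81 : ℝ) ^ (1 - 1/q) *
          ((∫ t in (0:ℝ)..1, t ^ 2 * |2 / 3 - t|) * |f'' m| ^ q
            + (∫ t in (0:ℝ)..1, t * (1 - t) * |2 / 3 - t|) * |f'' c| ^ q) ^ (1/q) := by
    intro c hc hintc hmemc
    set g : ℝ → ℝ := fun t => |f'' (t * m + (1 - t) * c)| with hgdef
    have hgint : IntervalIntegrable g MeasureTheory.volume 0 1 := hintc.abs
    have hg0 : ∀ t, 0 ≤ g t := fun t => abs_nonneg _
    have hgM : ∀ t ∈ Set.Icc (0:ℝ) 1, g t ≤ M := fun t ht => hbd _ (hmemc t ht)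
    have hH := aux_holder _ g q M hq hwc hw0 hw1 hgint hg0 hgM
    rw [aux_W] at hH
    have hgm : AEStronglyMeasurable g (MeasureTheory.volume.restrict (Set.uIoc (0:ℝ) 1)) := by
      rw [Set.uIoc_of_le (by norm_num : (0:ℝ) ≤ 1)]
      exact hgint.1.aestronglyMeasurable
    have hcx : (∫ t in (0:ℝ)..1, t * |2/3 - t| * g t ^ q) ≤
        (∫ t in (0:ℝ)..1, t ^ 2 * |2 / 3 - t|) * |f'' m| ^ q
          + (∫ t in (0:ℝ)..1, t * (1 - t) * |2 / 3 - t|) * |f'' c| ^ q := by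
      have hle : ∀ t ∈ Set.Icc (0:ℝ) 1, t * |2/3 - t| * g t ^ q ≤
          t ^ 2 * |2 / 3 - t| * |f'' m| ^ q + t * (1 - t) * |2 / 3 - t| * |f'' c| ^ q := by
        intro t ht
        have h1 := hconv m hmm c hc t ht
        calc t * |2/3 - t| * g t ^ q
            ≤ t * |2/3 - t| * (t * |f'' m| ^ q + (1 - t) * |f'' c| ^ q) :=
              mul_le_mul_of_nonneg_left h1 (hw0 t ht)
          _ = t ^ 2 * |2 / 3 - t| * |f'' m| ^ q + t * (1 - t) * |2 / 3 - t| * |f'' c| ^ q := by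
              ring
      have hint1 : IntervalIntegrable (fun t => t * |2/3 - t| * g t ^ q)
          MeasureTheory.volume 0 1 := by
        apply IntervalIntegrable.mono_fun (_root_.intervalIntegrable_const (c := M ^ q))
        · exact hwc.aestronglyMeasurable.mul
            ((Real.continuous_rpow_const hq0.le).comp_aestronglyMeasurable hgm)
        · filter_upwards [MeasureTheory.ae_restrict_mem measurableSet_uIoc] with t ht
          rw [Set.uIoc_of_le (by norm_num : (0:ℝ) ≤ 1)] at ht
          have ht' : t ∈ Set.Icc (0:ℝ) 1 := Set.Ioc_subset_Icc_self ht
          have hb1 : g t ^ q ≤ M ^ q := Real.rpow_le_rpow (hg0 t) (hgM t ht') hq0.le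
          rw [Real.norm_eq_abs, Real.norm_eq_abs,
            abs_of_nonneg (mul_nonneg (hw0 t ht') (Real.rpow_nonneg (hg0 t) _)),
            abs_of_nonneg (Real.rpow_nonneg hM0 _)]
          calc t * |2/3 - t| * g t ^ q ≤ 1 * (M ^ q) := by
                apply mul_le_mul (hw1 t ht') hb1 (Real.rpow_nonneg (hg0 t) _) zero_le_one
            _ = M ^ q := one_mul _
      have hcA : Continuous fun t : ℝ => t ^ 2 * |2 / 3 - t| * |f'' m| ^ q :=
        ((continuous_pow 2).mul (continuous_const.sub continuous_id).abs).mul continuous_const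
      have hcB : Continuous fun t : ℝ => t * (1 - t) * |2 / 3 - t| * |f'' c| ^ q :=
        ((continuous_id.mul (continuous_const.sub continuous_id)).mul
          (continuous_const.sub continuous_id).abs).mul continuous_const
      have hint2 : IntervalIntegrable
          (fun t => t ^ 2 * |2 / 3 - t| * |f'' m| ^ q + t * (1 - t) * |2 / 3 - t| * |f'' c| ^ q)
          MeasureTheory.volume 0 1 := (hcA.add hcB).intervalIntegrable _ _
      have hmono := intervalIntegral.integral_mono_on (by norm_num) hint1 hint2 hle
      rwa [intervalIntegral.integral_add
          (hcA.intervalIntegrable _ _)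
          (hcB.intervalIntegrable _ _),
        intervalIntegral.integral_mul_const, intervalIntegral.integral_mul_const] at hmono
    calc (∫ t in (0:ℝ)..1, t * |2/3 - t| * g t)
        ≤ (8/81 : ℝ) ^ (1 - 1/q) * (∫ t in (0:ℝ)..1, t * |2/3 - t| * g t ^ q) ^ (1/q) := hH
      _ ≤ _ := by
          apply mul_le_mul_of_nonneg_left _ (Real.rpow_nonneg (by norm_num) _)
          apply Real.rpow_le_rpow _ hcx (by positivity)
          apply intervalIntegral.integral_nonneg (by norm_num)
          exact fun t ht => mul_nonneg (hw0 t ht) (Real.rpow_nonneg (hg0 t) _)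
  have hlegA := leg a ham hint_a hmem_a
  have hlegB := leg b hbm hint_b hmem_b
  set Ka := ∫ t in (0:ℝ)..1, t * |2/3 - t| * |f'' (t * m + (1 - t) * a)| with hKadef
  set Kb := ∫ t in (0:ℝ)..1, t * |2/3 - t| * |f'' (t * m + (1 - t) * b)| with hKbdef
  have hpos2 : (0:ℝ) ≤ (b - a)/2 := by positivity
  have hKa : |Ja| ≤ (b - a) ^ 2 / 4 * Ka := by
    rw [hJadef, hKadef]
    calc |∫ t in (0:ℝ)..1, (t ^ 2 - 2/3 * t) * (f'' (t * m + (1 - t) * a) * (m - a) * (m - a))|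
        ≤ ∫ t in (0:ℝ)..1,
            |(t ^ 2 - 2/3 * t) * (f'' (t * m + (1 - t) * a) * (m - a) * (m - a))| :=
          intervalIntegral.abs_integral_le_integral_abs (by norm_num)
      _ = ∫ t in (0:ℝ)..1, (b - a) ^ 2 / 4 * (t * |2/3 - t| * |f'' (t * m + (1 - t) * a)|) := by
          refine intervalIntegral.integral_congr fun t ht => ?_
          rw [Set.uIcc_of_le (by norm_num : (0:ℝ) ≤ 1)] at ht
          rw [hma, show t ^ 2 - 2/3 * t = t * (t - 2/3) by ring]
          simp only [abs_mul]
          rw [abs_of_nonneg ht.1, abs_sub_comm t (2/3), abs_of_nonneg hpos2]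
          ring
      _ = (b - a) ^ 2 / 4 * ∫ t in (0:ℝ)..1, t * |2/3 - t| * |f'' (t * m + (1 - t) * a)| :=
          intervalIntegral.integral_const_mul _ _
  have hKb : |Jb| ≤ (b - a) ^ 2 / 4 * Kb := by
    rw [hJbdef, hKbdef]
    calc |∫ t in (0:ℝ)..1, (t ^ 2 - 2/3 * t) * (f'' (t * m + (1 - t) * b) * (m - b) * (m - b))|
        ≤ ∫ t in (0:ℝ)..1,
            |(t ^ 2 - 2/3 * t) * (f'' (t * m + (1 - t) * b) * (m - b) * (m - b))| :=
          intervalIntegral.abs_integral_le_integral_abs (by norm_num)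
      _ = ∫ t in (0:ℝ)..1, (b - a) ^ 2 / 4 * (t * |2/3 - t| * |f'' (t * m + (1 - t) * b)|) := by
          refine intervalIntegral.integral_congr fun t ht => ?_
          rw [Set.uIcc_of_le (by norm_num : (0:ℝ) ≤ 1)] at ht
          rw [hmb, show t ^ 2 - 2/3 * t = t * (t - 2/3) by ring]
          simp only [abs_mul, abs_neg]
          rw [abs_of_nonneg ht.1, abs_sub_comm t (2/3), abs_of_nonneg hpos2]
          ring
      _ = (b - a) ^ 2 / 4 * ∫ t in (0:ℝ)..1, t * |2/3 - t| * |f'' (t * m + (1 - t) * b)| :=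
          intervalIntegral.integral_const_mul _ _
  set Sa := (∫ t in (0:ℝ)..1, t ^ 2 * |2 / 3 - t|) * |f'' m| ^ q
    + (∫ t in (0:ℝ)..1, t * (1 - t) * |2 / 3 - t|) * |f'' a| ^ q with hSadef
  set Sb := (∫ t in (0:ℝ)..1, t ^ 2 * |2 / 3 - t|) * |f'' m| ^ q
    + (∫ t in (0:ℝ)..1, t * (1 - t) * |2 / 3 - t|) * |f'' b| ^ q with hSbdef
  have hrw : ((8:ℝ)/81) ^ (1 - 1/q) = (8/81) * ((81:ℝ)/8) ^ (1/q) := by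
    rw [Real.rpow_sub (by norm_num : (0:ℝ) < 8/81), Real.rpow_one,
      show ((81:ℝ)/8) = ((8:ℝ)/81)⁻¹ by norm_num,
      Real.inv_rpow (by norm_num : (0:ℝ) ≤ 8/81), div_eq_mul_inv]
  calc |(1 / 6) * (f a + 4 * f m + f b) - (1 / (b - a)) * ∫ u in a..b, f u|
      = 1/4 * |Ja + Jb| := by rw [hId, abs_mul]; norm_num
    _ ≤ 1/4 * (|Ja| + |Jb|) := by
        have := abs_add_le Ja Jb
        linarith
    _ ≤ 1/4 * ((b - a) ^ 2 / 4 * Ka + (b - a) ^ 2 / 4 * Kb) := by linarith [hKa, hKb]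
    _ ≤ 1/4 * ((b - a) ^ 2 / 4 * ((8/81 : ℝ) ^ (1 - 1/q) * Sa ^ (1/q))
          + (b - a) ^ 2 / 4 * ((8/81 : ℝ) ^ (1 - 1/q) * Sb ^ (1/q))) := by
        have h1 : Ka ≤ (8/81 : ℝ) ^ (1 - 1/q) * Sa ^ (1/q) := hlegA
        have h2 : Kb ≤ (8/81 : ℝ) ^ (1 - 1/q) * Sb ^ (1/q) := hlegB
        have hc4 : (0:ℝ) ≤ (b - a) ^ 2 / 4 := by positivity
        nlinarith [mul_le_mul_of_nonneg_left h1 hc4, mul_le_mul_of_nonneg_left h2 hc4]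
    _ = (b - a) ^ 2 / 162 * (81 / 8 : ℝ) ^ (1 / q) * (Sa ^ (1/q) + Sb ^ (1/q)) := by
        rw [hrw]
        ring
end

section
/- Let f be twice differentiable on an open interval containing [a,b] with |f''|^q convex on [a,b] for some q > 1, and let p = q/(q−1). Then |(f(a)+f(b))/2 − (1/(b−a))∫ₐᵇ f(x) dx| ≤ ((b−a)²/4)·(B(1+p,1+p))^{1/p}·{ [(|f''((a+b)/2)|^q + |f''(a)|^q)/2]^{1/q} + [(|f''((a+b)/2)|^q + |f''(b)|^q)/2]^{1/q} }, where B is the Beta function. -/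
/-!
Integrating by parts twice and substituting `x = a + t (b - a)` expresses the trapezoid error as
`(f a + f b) / 2 - ⨍ f = (b - a)² / 2 * ∫₀¹ t (1 - t) f''(a + t (b - a)) dt`.
Split `[0, 1]` at `1/2`. On each half, Hölder's inequality separates the kernel `t (1 - t)` from
`|f''|`, and the right Hermite–Hadamard inequality for the convex function `|f''|^q` bounds
`∫ |f''|^q` by the trapezoid rule at the endpoints of that half. Since the kernel is symmetric
under `t ↦ 1 - t`, each half carries exactly half of `B(1 + p, 1 + p) = ∫₀¹ (t (1 - t))^p`.
-/

open MeasureTheory Set intervalIntegral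

theorem convexOn_Icc_of_forall {φ : ℝ → ℝ} {a b : ℝ}
    (h : ∀ x ∈ Icc a b, ∀ y ∈ Icc a b, ∀ t ∈ Icc (0:ℝ) 1,
      φ (t * x + (1 - t) * y) ≤ t * φ x + (1 - t) * φ y) :
    ConvexOn ℝ (Icc a b) φ := by
  refine ⟨convex_Icc a b, fun x hx y hy s t hs ht hst => ?_⟩
  obtain rfl : t = 1 - s := by linarith
  exact h x hx y hy s ⟨hs, by linarith⟩

theorem ConvexOn.comp_unitInterval {φ : ℝ → ℝ} {a b : ℝ} (hφ : ConvexOn ℝ (Icc a b) φ)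
    (hab : a ≤ b) : ConvexOn ℝ (Icc 0 1) fun t => φ ((b - a) * t + a) := by
  have hsub : Icc (0:ℝ) 1 ⊆ AffineMap.lineMap a b ⁻¹' Icc a b := fun t ht => by
    simp only [mem_preimage, AffineMap.lineMap_apply_ring', mem_Icc]
    constructor <;> nlinarith [ht.1, ht.2]
  simpa [Function.comp_def, AffineMap.lineMap_apply_ring', mul_comm] using
    (hφ.comp_affineMap (AffineMap.lineMap a b)).subset hsub (convex_Icc 0 1)

theorem ConvexOn.integral_le_mul_add_div_two {φ : ℝ → ℝ} {l r : ℝ}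
    (hφ : ConvexOn ℝ (Icc l r) φ) (hlr : l ≤ r) (hint : IntervalIntegrable φ volume l r) :
    ∫ t in l..r, φ t ≤ (r - l) * ((φ l + φ r) / 2) := by
  rcases hlr.eq_or_lt with rfl | hlr
  · simp
  have hrl : 0 < r - l := sub_pos.2 hlr
  have hchord : ∀ t ∈ Icc l r, φ t ≤ φ l + (t - l) * ((φ r - φ l) / (r - l)) := by
    intro t ht
    have h := hφ.2 (left_mem_Icc.2 hlr.le) (right_mem_Icc.2 hlr.le)
      (div_nonneg (sub_nonneg.2 ht.2) hrl.le) (div_nonneg (sub_nonneg.2 ht.1) hrl.le)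
      (by rw [← add_div, div_eq_one_iff_eq hrl.ne']; ring)
    have ht' : ((r - t) / (r - l)) • l + ((t - l) / (r - l)) • r = t := by
      simp only [smul_eq_mul]; field_simp; ring
    rw [ht'] at h
    calc φ t ≤ _ := h
      _ = _ := by simp only [smul_eq_mul]; field_simp; ring
  calc ∫ t in l..r, φ t ≤ ∫ t in l..r, (φ l + (t - l) * ((φ r - φ l) / (r - l))) :=
        integral_mono_on hlr.le hint ((by fun_prop : Continuous fun t : ℝ =>
          φ l + (t - l) * ((φ r - φ l) / (r - l))).intervalIntegrable _ _) hchord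
    _ = (r - l) * ((φ l + φ r) / 2) := by
        have hlin : Continuous fun t : ℝ => (t - l) * ((φ r - φ l) / (r - l)) := by fun_prop
        rw [intervalIntegral.integral_add intervalIntegrable_const (hlin.intervalIntegrable _ _),
          intervalIntegral.integral_mul_const, intervalIntegral.integral_comp_sub_right fun t => t]
        simp only [intervalIntegral.integral_const, smul_eq_mul, sub_self, integral_id]
        field_simp
        ring

theorem intervalIntegral.integral_mul_le_Lp_mul_Lq_of_nonneg {p q : ℝ}
    (hpq : p.HolderConjugate q) {f g : ℝ → ℝ} {l r : ℝ} (hlr : l ≤ r)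
    (hf₀ : ∀ t ∈ Ioc l r, 0 ≤ f t) (hg₀ : ∀ t ∈ Ioc l r, 0 ≤ g t)
    (hf : MemLp f (ENNReal.ofReal p) (volume.restrict (Ioc l r)))
    (hg : MemLp g (ENNReal.ofReal q) (volume.restrict (Ioc l r))) :
    ∫ t in l..r, f t * g t ≤
      (∫ t in l..r, f t ^ p) ^ (1 / p) * (∫ t in l..r, g t ^ q) ^ (1 / q) := by
  simp only [integral_of_le hlr]
  exact MeasureTheory.integral_mul_le_Lp_mul_Lq_of_nonneg hpq
    (ae_restrict_of_forall_mem measurableSet_Ioc hf₀)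
    (ae_restrict_of_forall_mem measurableSet_Ioc hg₀) hf hg

theorem Real.HolderConjugate.mul_rpow_mul_mul_rpow {p q : ℝ} (hpq : p.HolderConjugate q)
    {c x y : ℝ} (hc : 0 ≤ c) (hx : 0 ≤ x) (hy : 0 ≤ y) :
    (c * x) ^ (1 / p) * (c * y) ^ (1 / q) = c * (x ^ (1 / p) * y ^ (1 / q)) := by
  have hc' : c ^ (1 / p) * c ^ (1 / q) = c := by
    rw [← Real.rpow_add' hc (by simp [hpq.inv_add_inv_eq_one]),
      one_div, one_div, hpq.inv_add_inv_eq_one, Real.rpow_one]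
  rw [Real.mul_rpow hc hx, Real.mul_rpow hc hy]
  linear_combination (x ^ (1 / p) * y ^ (1 / q)) * hc'

theorem integral_halves_of_symm {φ : ℝ → ℝ} (hφ : ∀ t, φ (1 - t) = φ t)
    (hint : IntervalIntegrable φ volume 0 1) :
    ∫ t in (0:ℝ)..1 / 2, φ t = (∫ t in (0:ℝ)..1, φ t) / 2 ∧
      ∫ t in (1 / 2 : ℝ)..1, φ t = (∫ t in (0:ℝ)..1, φ t) / 2 := by
  have hsymm : ∫ t in (1 / 2 : ℝ)..1, φ t = ∫ t in (0:ℝ)..1 / 2, φ t := by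
    have h := integral_comp_sub_left φ 1 (a := 0) (b := 1 / 2)
    norm_num [hφ] at h
    exact h.symm
  have hmid : (1 / 2 : ℝ) ∈ uIcc 0 1 := by norm_num [uIcc_of_le]
  have hsplit := integral_add_adjacent_intervals
    (hint.mono_set (uIcc_subset_uIcc left_mem_uIcc hmid))
    (hint.mono_set (uIcc_subset_uIcc hmid right_mem_uIcc))
  constructor <;> linarith

theorem integral_mul_abs_le_of_convexOn_rpow {p q : ℝ} (hpq : p.HolderConjugate q)
    {K g : ℝ → ℝ} {l r : ℝ} (hlr : l ≤ r) (hK : ContinuousOn K (Icc l r))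
    (hK₀ : ∀ t ∈ Icc l r, 0 ≤ K t) (hψ : ConvexOn ℝ (Icc l r) fun t => |g t| ^ q)
    (hg : IntervalIntegrable g volume l r) :
    ∫ t in l..r, K t * |g t| ≤
      (∫ t in l..r, K t ^ p) ^ (1 / p) * ((r - l) * ((|g l| ^ q + |g r| ^ q) / 2)) ^ (1 / q) := by
  have hq : 0 < q := hpq.symm.pos
  have : IsFiniteMeasure (volume.restrict (Ioc l r)) :=
    isFiniteMeasure_restrict.2 measure_Ioc_lt_top.ne
  have hψ_int : IntegrableOn (fun t => |g t| ^ q) (Ioc l r) := by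
    refine Integrable.of_bound ((continuous_abs.rpow_const fun _ => Or.inr hq.le)
      |>.comp_aestronglyMeasurable hg.1.aestronglyMeasurable) (max (|g l| ^ q) (|g r| ^ q))
      (ae_restrict_of_forall_mem measurableSet_Ioc fun t ht => ?_)
    rw [Real.norm_of_nonneg (by positivity)]
    exact hψ.le_max_of_mem_Icc (left_mem_Icc.2 hlr) (right_mem_Icc.2 hlr) (Ioc_subset_Icc_self ht)
  have hgLq : MemLp (fun t => |g t|) (ENNReal.ofReal q) (volume.restrict (Ioc l r)) := by
    refine (integrable_norm_rpow_iff hg.1.aestronglyMeasurable.norm (by simpa using hq)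
      ENNReal.ofReal_ne_top).1 ?_
    simpa [ENNReal.toReal_ofReal hq.le, IntegrableOn] using hψ_int
  have hKLp : MemLp K (ENNReal.ofReal p) (volume.restrict (Ioc l r)) := by
    obtain ⟨C, hC⟩ := isCompact_Icc.exists_bound_of_continuousOn hK
    exact MemLp.of_bound ((hK.aestronglyMeasurable measurableSet_Icc).mono_measure
      (Measure.restrict_mono Ioc_subset_Icc_self le_rfl)) C
      (ae_restrict_of_forall_mem measurableSet_Ioc fun t ht => hC t (Ioc_subset_Icc_self ht))
  calc ∫ t in l..r, K t * |g t|
      ≤ (∫ t in l..r, K t ^ p) ^ (1 / p) * (∫ t in l..r, |g t| ^ q) ^ (1 / q) :=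
        intervalIntegral.integral_mul_le_Lp_mul_Lq_of_nonneg hpq hlr
          (fun t ht => hK₀ t (Ioc_subset_Icc_self ht)) (fun t _ => abs_nonneg _) hKLp hgLq
    _ ≤ _ := by
        have hK₀' : 0 ≤ ∫ t in l..r, K t ^ p :=
          integral_nonneg hlr fun t ht => Real.rpow_nonneg (hK₀ t ht) p
        have hψ₀ : 0 ≤ ∫ t in l..r, |g t| ^ q := integral_nonneg hlr fun t _ => by positivity
        gcongr
        exact hψ.integral_le_mul_add_div_two hlr
          ((intervalIntegrable_iff_integrableOn_Ioc_of_le hlr).2 hψ_int)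

theorem abs_integral_mul_one_sub_mul_le_of_convexOn_rpow {p q : ℝ} (hpq : p.HolderConjugate q)
    {g : ℝ → ℝ} (hψ : ConvexOn ℝ (Icc 0 1) fun t => |g t| ^ q)
    (hg : IntervalIntegrable g volume 0 1) :
    |∫ t in (0:ℝ)..1, t * (1 - t) * g t| ≤
      (∫ t in (0:ℝ)..1, (t * (1 - t)) ^ p) ^ (1 / p) / 2 *
        (((|g (1 / 2)| ^ q + |g 0| ^ q) / 2) ^ (1 / q) +
          ((|g (1 / 2)| ^ q + |g 1| ^ q) / 2) ^ (1 / q)) := by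
  set B := ∫ t in (0:ℝ)..1, (t * (1 - t)) ^ p
  have hK : Continuous fun t : ℝ => t * (1 - t) := by fun_prop
  have hB := integral_halves_of_symm (φ := fun t => (t * (1 - t)) ^ p) (fun t => by ring_nf)
    ((hK.rpow_const fun _ => Or.inr hpq.pos.le).intervalIntegrable 0 1)
  have hB₀ : 0 ≤ B := integral_nonneg zero_le_one fun t ht =>
    Real.rpow_nonneg (mul_nonneg ht.1 (sub_nonneg.2 ht.2)) p
  have hmid : (1 / 2 : ℝ) ∈ uIcc 0 1 := by norm_num [uIcc_of_le]
  have hleft := integral_mul_abs_le_of_convexOn_rpow hpq (by norm_num) hK.continuousOn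
    (fun t ht => mul_nonneg ht.1 (by linarith [ht.2]))
    (hψ.subset (Icc_subset_Icc le_rfl (by norm_num)) (convex_Icc _ _))
    (hg.mono_set (uIcc_subset_uIcc left_mem_uIcc hmid))
  have hright := integral_mul_abs_le_of_convexOn_rpow hpq (by norm_num) hK.continuousOn
    (fun t ht => mul_nonneg (by linarith [ht.1]) (by linarith [ht.2]))
    (hψ.subset (Icc_subset_Icc (by norm_num) le_rfl) (convex_Icc _ _))
    (hg.mono_set (uIcc_subset_uIcc hmid right_mem_uIcc))
  have hKg : IntervalIntegrable (fun t => t * (1 - t) * |g t|) volume 0 1 :=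
    hg.abs.continuousOn_mul hK.continuousOn
  calc |∫ t in (0:ℝ)..1, t * (1 - t) * g t|
      ≤ ∫ t in (0:ℝ)..1, t * (1 - t) * |g t| := by
        refine (abs_integral_le_integral_abs zero_le_one).trans_eq (integral_congr fun t ht => ?_)
        rw [uIcc_of_le zero_le_one] at ht
        simp only [abs_mul, abs_of_nonneg ht.1, abs_of_nonneg (sub_nonneg.2 ht.2)]
    _ = (∫ t in (0:ℝ)..1 / 2, t * (1 - t) * |g t|) +
          ∫ t in (1 / 2 : ℝ)..1, t * (1 - t) * |g t| :=
        (integral_add_adjacent_intervals (hKg.mono_set (uIcc_subset_uIcc left_mem_uIcc hmid))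
          (hKg.mono_set (uIcc_subset_uIcc hmid right_mem_uIcc))).symm
    _ ≤ _ := add_le_add hleft hright
    _ = _ := by
        rw [hB.1, hB.2, add_comm (|g 0| ^ q), show B / 2 = 1 / 2 * B by ring,
          show (1:ℝ) / 2 - 0 = 1 / 2 by norm_num, show (1:ℝ) - 1 / 2 = 1 / 2 by norm_num,
          hpq.mul_rpow_mul_mul_rpow (by norm_num) hB₀ (by positivity),
          hpq.mul_rpow_mul_mul_rpow (by norm_num) hB₀ (by positivity)]
        ring

theorem integral_sub_mul_sub_mul_eq_of_hasDerivAt {f f' f'' : ℝ → ℝ} {a b : ℝ}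
    (hf : ∀ x ∈ uIcc a b, HasDerivAt f (f' x) x)
    (hf' : ∀ x ∈ uIcc a b, HasDerivAt f' (f'' x) x)
    (hf'' : IntervalIntegrable f'' volume a b) :
    ∫ x in a..b, (x - a) * (b - x) * f'' x = (b - a) * (f a + f b) - 2 * ∫ x in a..b, f x := by
  have hf'_int : IntervalIntegrable f' volume a b :=
    ContinuousOn.intervalIntegrable fun x hx => (hf' x hx).continuousAt.continuousWithinAt
  have h₁ : ∫ x in a..b, (x - a) * (b - x) * f'' x =
      -∫ x in a..b, (a + b - 2 * x) * f' x := by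
    have hu' : Continuous fun x : ℝ => a + b - 2 * x := by fun_prop
    rw [intervalIntegral.integral_mul_deriv_eq_deriv_mul (u' := fun x => a + b - 2 * x)
      (fun x _ => ?_) hf' (hu'.intervalIntegrable _ _) hf'']
    · simp
    · exact (((hasDerivAt_id x).sub_const a).mul ((hasDerivAt_id x).const_sub b)).congr_deriv
        (by rw [id]; ring)
  have h₂ : ∫ x in a..b, (a + b - 2 * x) * f' x =
      (a - b) * (f a + f b) + 2 * ∫ x in a..b, f x := by
    rw [intervalIntegral.integral_mul_deriv_eq_deriv_mul (u' := fun _ => -2)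
      (fun x _ => ?_) hf intervalIntegrable_const hf'_int]
    · simp only [neg_mul, intervalIntegral.integral_neg, intervalIntegral.integral_const_mul]
      ring
    · exact (((hasDerivAt_id x).const_mul 2).const_sub (a + b)).congr_deriv (by simp)
  rw [h₁, h₂]
  ring

theorem integral_sub_mul_sub_mul_eq_unitInterval (φ : ℝ → ℝ) (a b : ℝ) :
    ∫ x in a..b, (x - a) * (b - x) * φ x =
      (b - a) ^ 3 * ∫ t in (0:ℝ)..1, t * (1 - t) * φ ((b - a) * t + a) := by
  rcases eq_or_ne a b with rfl | hab
  · simp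
  have hba : b - a ≠ 0 := sub_ne_zero.2 hab.symm
  have h := integral_comp_mul_add (a := 0) (b := 1) (fun x => (x - a) * (b - x) * φ x) hba a
  simp only [mul_zero, zero_add, mul_one, sub_add_cancel, smul_eq_mul] at h
  rw [eq_inv_mul_iff_mul_eq₀ hba] at h
  rw [← h, ← intervalIntegral.integral_const_mul, ← intervalIntegral.integral_const_mul]
  congr 1
  ext t
  ring

theorem trapezoid_sub_average_eq_integral {f f' f'' : ℝ → ℝ} {a b : ℝ} (hab : a ≠ b)
    (hf : ∀ x ∈ uIcc a b, HasDerivAt f (f' x) x)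
    (hf' : ∀ x ∈ uIcc a b, HasDerivAt f' (f'' x) x)
    (hf'' : IntervalIntegrable f'' volume a b) :
    (f a + f b) / 2 - 1 / (b - a) * ∫ x in a..b, f x =
      (b - a) ^ 2 / 2 * ∫ t in (0:ℝ)..1, t * (1 - t) * f'' ((b - a) * t + a) := by
  have h := integral_sub_mul_sub_mul_eq_of_hasDerivAt hf hf' hf''
  rw [integral_sub_mul_sub_mul_eq_unitInterval] at h
  have hba : b - a ≠ 0 := sub_ne_zero.2 hab.symm
  field_simp
  linear_combination -h

theorem stmt_13 (f f' f'' : ℝ → ℝ) (a b q p : ℝ) (hab : a < b) (hq : 1 < q)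
    (hpq : p = q / (q - 1))
    (hf' : ∀ x ∈ Set.Icc a b, HasDerivAt f (f' x) x)
    (hf'' : ∀ x ∈ Set.Icc a b, HasDerivAt f' (f'' x) x)
    (hint : IntervalIntegrable f'' MeasureTheory.volume a b)
    (hconv : ∀ x ∈ Set.Icc a b, ∀ y ∈ Set.Icc a b, ∀ t ∈ Set.Icc (0:ℝ) 1,
      |f'' (t * x + (1 - t) * y)| ^ q ≤ t * |f'' x| ^ q + (1 - t) * |f'' y| ^ q) :
    |(f a + f b) / 2 - (1 / (b - a)) * ∫ u in a..b, f u| ≤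
      (b - a) ^ 2 / 4 *
        (∫ s in (0:ℝ)..1, s ^ ((1 + p) - 1) * (1 - s) ^ ((1 + p) - 1)) ^ (1 / p) *
        (((|f'' ((a + b) / 2)| ^ q + |f'' a| ^ q) / 2) ^ (1 / q)
          + ((|f'' ((a + b) / 2)| ^ q + |f'' b| ^ q) / 2) ^ (1 / q)) := by
  have hpq' : p.HolderConjugate q := by
    rw [hpq]
    exact (Real.HolderConjugate.conjExponent hq).symm
  rw [← uIcc_of_le hab.le] at hf' hf''
  have hψ : ConvexOn ℝ (Icc 0 1) fun t => |f'' ((b - a) * t + a)| ^ q :=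
    (convexOn_Icc_of_forall (φ := fun x => |f'' x| ^ q) hconv).comp_unitInterval hab.le
  have hg : IntervalIntegrable (fun t => f'' ((b - a) * t + a)) volume 0 1 := by
    simpa [(sub_pos.2 hab).ne'] using (hint.comp_add_right a).comp_mul_left (c := b - a)
  have hB : ∫ s in (0:ℝ)..1, s ^ ((1 + p) - 1) * (1 - s) ^ ((1 + p) - 1) =
      ∫ t in (0:ℝ)..1, (t * (1 - t)) ^ p := by
    refine integral_congr fun t ht => ?_
    rw [uIcc_of_le zero_le_one] at ht
    simp only [add_sub_cancel_left, Real.mul_rpow ht.1 (sub_nonneg.2 ht.2)]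
  rw [trapezoid_sub_average_eq_integral hab.ne hf' hf'' hint, hB, abs_mul,
    abs_of_nonneg (by positivity)]
  refine (mul_le_mul_of_nonneg_left
    (abs_integral_mul_one_sub_mul_le_of_convexOn_rpow hpq' hψ hg) (by positivity)).trans_eq ?_
  simp only [mul_zero, zero_add, mul_one, sub_add_cancel,
    show (b - a) * (1 / 2) + a = (a + b) / 2 by ring]
  ring
end

section
/- Let f be twice differentiable on an open interval containing [a, mb] with f'' ∈ L¹, where 0 ≤ a < mb, m ∈ (0,1], α ∈ [0,1], and |f''|^q is (α,m)-convex on [a,b] for some q > 1, p = q/(q−1). Then |f((a+mb)/2) − (1/(mb−a))∫ₐ^{mb} f(u) du| ≤ ((mb−a)²/16)·(1/(2p+1))^{1/p}·{ [(|f''((a+mb)/2)|^q + αm|f''(a/m)|^q)/(α+1)]^{1/q} + [(|f''((a+mb)/2)|^q + αm|f''(b)|^q)/(α+1)]^{1/q} }. -/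
/-!
Two integrations by parts give, with `c = m b` and `M = (a + c) / 2`,
`∫ₐᶜ f - (c - a) f(M) = ∫ₐᴹ (s - a)²/2 f''(s) ds - ∫_c^M (s - c)²/2 f''(s) ds`.
Both halves have the form `∫_{m y}^{x} (s - m y)²/2 f''(s) ds` with `x = M` and `y = a/m` resp.
`y = b`, and on that segment `(α,m)`-convexity gives
`|f''(s)|^q ≤ t^α |f''(x)|^q + m (1 - t^α) |f''(y)|^q` for `t = (s - m y)/(x - m y)`.
Hölder's inequality splits off the weight, `∫₀ʰ (s²/2)^p ds = h^(2p+1) / (2^p (2p+1))`, and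
integrating the convexity bound gives `h (|f''(x)|^q + α m |f''(y)|^q) / (α + 1)`.
-/

open MeasureTheory intervalIntegral Set

theorem abs_integral_mul_le_Lp_mul_Lq {w G : ℝ → ℝ} {u v p q : ℝ} (huv : u ≤ v)
    (hpq : p.HolderConjugate q) (hw0 : ∀ s ∈ Ioc u v, 0 ≤ w s)
    (hw : MemLp w (ENNReal.ofReal p) (volume.restrict (Ioc u v)))
    (hG : MemLp G (ENNReal.ofReal q) (volume.restrict (Ioc u v))) :
    |∫ s in u..v, w s * G s| ≤
      (∫ s in u..v, w s ^ p) ^ (1 / p) * (∫ s in u..v, |G s| ^ q) ^ (1 / q) := by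
  calc |∫ s in u..v, w s * G s|
      ≤ ∫ s in u..v, |w s * G s| := abs_integral_le_integral_abs huv
    _ = ∫ s in Ioc u v, w s * |G s| := by
        rw [integral_of_le huv]
        refine setIntegral_congr_fun measurableSet_Ioc fun s hs => ?_
        rw [abs_mul, abs_of_nonneg (hw0 s hs)]
    _ ≤ (∫ s in Ioc u v, w s ^ p) ^ (1 / p) * (∫ s in Ioc u v, |G s| ^ q) ^ (1 / q) :=
        integral_mul_le_Lp_mul_Lq_of_nonneg hpq (ae_restrict_of_forall_mem measurableSet_Ioc hw0)
          (.of_forall fun s => abs_nonneg (G s)) hw hG.abs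
    _ = _ := by rw [integral_of_le huv, integral_of_le huv]

theorem integral_sub_sq_div_two_rpow {u v p : ℝ} (huv : u ≤ v) (hp : 0 ≤ p) :
    ∫ s in u..v, ((s - u) ^ 2 / 2) ^ p = (v - u) ^ (2 * p + 1) / (2 ^ p * (2 * p + 1)) := by
  have hpow : ∀ s ∈ uIcc u v, ((s - u) ^ 2 / 2) ^ p = (s - u) ^ (2 * p) / 2 ^ p := by
    intro s hs
    have hsu : 0 ≤ s - u := sub_nonneg.2 (uIcc_of_le huv ▸ hs).1
    rw [Real.div_rpow (by positivity) zero_le_two, ← Real.rpow_natCast, ← Real.rpow_mul hsu]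
    norm_num
  rw [integral_congr hpow, intervalIntegral.integral_div,
    integral_comp_sub_right (fun x => x ^ (2 * p)), sub_self,
    integral_rpow (Or.inl (by linarith)), Real.zero_rpow (by positivity), sub_zero, div_div,
    mul_comm (2 * p + 1)]

theorem integral_div_sub_rpow {u v α : ℝ} (huv : u ≠ v) (hα : -1 < α) :
    ∫ s in u..v, ((s - u) / (v - u)) ^ α = (v - u) / (α + 1) := by
  have hvu : v - u ≠ 0 := sub_ne_zero.2 huv.symm
  rw [integral_comp_sub_right (fun x => (x / (v - u)) ^ α), sub_self,
    integral_comp_div (fun x => x ^ α) hvu, zero_div, div_self hvu,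
    integral_rpow (Or.inl hα), Real.one_rpow, Real.zero_rpow (by linarith), smul_eq_mul]
  ring

theorem rpow_inv_integral_sub_sq_div_two_rpow {u v p : ℝ} (huv : u ≤ v) (hp : 0 < p) :
    (∫ s in u..v, ((s - u) ^ 2 / 2) ^ p) ^ (1 / p) =
      (v - u) ^ 2 / 2 * (v - u) ^ (1 / p) * (1 / (2 * p + 1)) ^ (1 / p) := by
  have hvu : 0 ≤ v - u := sub_nonneg.2 huv
  have hexp : (2 * p + 1) * (1 / p) = 2 + 1 / p := by field_simp
  rw [integral_sub_sq_div_two_rpow huv hp.le, Real.div_rpow (by positivity) (by positivity),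
    Real.mul_rpow (by positivity) (by positivity), ← Real.rpow_mul hvu, hexp,
    Real.rpow_add' hvu (by positivity), ← Real.rpow_mul zero_le_two, mul_one_div_cancel hp.ne',
    Real.div_rpow zero_le_one (by positivity), Real.one_rpow, Real.rpow_one, Real.rpow_two]
  ring

theorem integral_le_of_le_interpolation {φ : ℝ → ℝ} {u v A B m α : ℝ} (huv : u < v)
    (hα : 0 ≤ α) (hφ : IntervalIntegrable φ volume u v)
    (hbound : ∀ s ∈ Icc u v,
      φ s ≤ ((s - u) / (v - u)) ^ α * A + m * (1 - ((s - u) / (v - u)) ^ α) * B) :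
    ∫ s in u..v, φ s ≤ (v - u) * ((A + α * m * B) / (α + 1)) := by
  have hpow : IntervalIntegrable (fun s => ((s - u) / (v - u)) ^ α) volume u v :=
    ((Real.continuous_rpow_const hα).comp (by fun_prop)).intervalIntegrable _ _
  calc ∫ s in u..v, φ s
      ≤ ∫ s in u..v, (A - m * B) * ((s - u) / (v - u)) ^ α + m * B :=
        integral_mono_on huv.le hφ ((hpow.const_mul _).add intervalIntegrable_const)
          fun s hs => (hbound s hs).trans_eq (by ring)
    _ = (v - u) * ((A + α * m * B) / (α + 1)) := by
        rw [integral_add (hpow.const_mul _) intervalIntegrable_const,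
          intervalIntegral.integral_const_mul, integral_div_sub_rpow huv.ne (by linarith),
          intervalIntegral.integral_const, smul_eq_mul]
        field_simp
        ring

theorem memLp_of_abs_rpow_le_interpolation {G : ℝ → ℝ} {u v A B m α q : ℝ} (huv : u < v)
    (hm : 0 ≤ m) (hα : 0 ≤ α) (hq : 0 < q) (hA : 0 ≤ A) (hB : 0 ≤ B)
    (hG : IntervalIntegrable G volume u v)
    (hbound : ∀ s ∈ Icc u v, |G s| ^ q ≤
      ((s - u) / (v - u)) ^ α * A + m * (1 - ((s - u) / (v - u)) ^ α) * B)
    (r : ENNReal) : MemLp G r (volume.restrict (Ioc u v)) := by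
  have hh : 0 < v - u := sub_pos.2 huv
  have hGbound : ∀ s ∈ Icc u v, |G s| ≤ (A + m * B) ^ (1 / q) := by
    intro s hs
    have ht : 0 ≤ (s - u) / (v - u) := div_nonneg (sub_nonneg.2 hs.1) hh.le
    have ht1 : ((s - u) / (v - u)) ^ α ≤ 1 :=
      Real.rpow_le_one ht ((div_le_one hh).2 (by linarith [hs.2])) hα
    have hle : |G s| ^ q ≤ A + m * B := by
      nlinarith [hbound s hs, mul_nonneg hA (sub_nonneg.2 ht1),
        mul_nonneg (mul_nonneg hm (Real.rpow_nonneg ht α)) hB]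
    calc |G s| = (|G s| ^ q) ^ (1 / q) := by
          rw [← Real.rpow_mul (abs_nonneg _), mul_one_div_cancel hq.ne', Real.rpow_one]
      _ ≤ (A + m * B) ^ (1 / q) := by gcongr
  exact MemLp.of_bound hG.1.aestronglyMeasurable _ <|
    ae_restrict_of_forall_mem measurableSet_Ioc fun s hs => hGbound s (Ioc_subset_Icc_self hs)

theorem abs_integral_sub_sq_mul_le_of_lt {G : ℝ → ℝ} {u v A B m α p q : ℝ} (huv : u < v)
    (hm : 0 ≤ m) (hα : 0 ≤ α) (hpq : p.HolderConjugate q) (hA : 0 ≤ A) (hB : 0 ≤ B)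
    (hG : IntervalIntegrable G volume u v)
    (hbound : ∀ s ∈ Icc u v, |G s| ^ q ≤
      ((s - u) / (v - u)) ^ α * A + m * (1 - ((s - u) / (v - u)) ^ α) * B) :
    |∫ s in u..v, (s - u) ^ 2 / 2 * G s| ≤
      (v - u) ^ 3 / 2 * (1 / (2 * p + 1)) ^ (1 / p) * ((A + α * m * B) / (α + 1)) ^ (1 / q) := by
  set h := v - u
  set K := (A + α * m * B) / (α + 1)
  have hh : 0 < h := sub_pos.2 huv
  have hp := hpq.pos
  have hq := hpq.symm.pos
  have hGLp : MemLp G (ENNReal.ofReal q) (volume.restrict (Ioc u v)) :=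
    memLp_of_abs_rpow_le_interpolation huv hm hα hq hA hB hG hbound _
  have hwLp : MemLp (fun s => (s - u) ^ 2 / 2) (ENNReal.ofReal p) (volume.restrict (Ioc u v)) :=
    MemLp.of_bound (by fun_prop) (h ^ 2 / 2) <|
      ae_restrict_of_forall_mem measurableSet_Ioc fun s hs => by
        rw [Real.norm_of_nonneg (by positivity)]
        gcongr <;> linarith [hs.1, hs.2]
  have hGq : ∫ s in u..v, |G s| ^ q ≤ h * K := by
    have hint := hGLp.integrable_norm_rpow'
    simp only [ENNReal.toReal_ofReal hq.le, Real.norm_eq_abs] at hint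
    exact integral_le_of_le_interpolation huv hα
      ((intervalIntegrable_iff_integrableOn_Ioc_of_le huv.le).2 hint) hbound
  have hGq0 : 0 ≤ ∫ s in u..v, |G s| ^ q :=
    intervalIntegral.integral_nonneg huv.le fun s _ => by positivity
  have hsplit : h ^ (1 / p) * h ^ (1 / q) = h := by
    rw [← Real.rpow_add hh, one_div, one_div, hpq.inv_add_inv_eq_one, Real.rpow_one]
  calc |∫ s in u..v, (s - u) ^ 2 / 2 * G s|
      ≤ (∫ s in u..v, ((s - u) ^ 2 / 2) ^ p) ^ (1 / p) * (∫ s in u..v, |G s| ^ q) ^ (1 / q) :=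
        abs_integral_mul_le_Lp_mul_Lq huv.le hpq (fun s _ => by positivity) hwLp hGLp
    _ ≤ h ^ 2 / 2 * h ^ (1 / p) * (1 / (2 * p + 1)) ^ (1 / p) * (h * K) ^ (1 / q) := by
        rw [rpow_inv_integral_sub_sq_div_two_rpow huv.le hp]
        gcongr
    _ = h ^ 3 / 2 * (1 / (2 * p + 1)) ^ (1 / p) * K ^ (1 / q) := by
        rw [Real.mul_rpow hh.le (by positivity)]
        linear_combination (h ^ 2 / 2 * (1 / (2 * p + 1)) ^ (1 / p) * K ^ (1 / q)) * hsplit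

theorem abs_integral_sub_sq_mul_le_of_ne {G : ℝ → ℝ} {u v A B m α p q : ℝ} (huv : u ≠ v)
    (hm : 0 ≤ m) (hα : 0 ≤ α) (hpq : p.HolderConjugate q) (hA : 0 ≤ A) (hB : 0 ≤ B)
    (hG : IntervalIntegrable G volume u v)
    (hbound : ∀ s ∈ uIcc u v, |G s| ^ q ≤
      ((s - u) / (v - u)) ^ α * A + m * (1 - ((s - u) / (v - u)) ^ α) * B) :
    |∫ s in u..v, (s - u) ^ 2 / 2 * G s| ≤
      |v - u| ^ 3 / 2 * (1 / (2 * p + 1)) ^ (1 / p) * ((A + α * m * B) / (α + 1)) ^ (1 / q) := by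
  rcases huv.lt_or_gt with h | h
  · rw [abs_of_pos (sub_pos.2 h)]
    exact abs_integral_sub_sq_mul_le_of_lt h hm hα hpq hA hB hG fun s hs =>
      hbound s (Icc_subset_uIcc hs)
  -- reflect `[v, u]` through `u` onto `[u, 2u - v]`
  have hrefl : ∫ s in u..v, (s - u) ^ 2 / 2 * G s =
      -∫ r in u..2 * u - v, (r - u) ^ 2 / 2 * G (2 * u - r) := by
    have hsub := integral_comp_sub_left (a := u) (b := 2 * u - v)
      (fun s => (s - u) ^ 2 / 2 * G s) (2 * u)
    rw [show 2 * u - (2 * u - v) = v by ring, show 2 * u - u = u by ring] at hsub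
    rw [integral_symm, ← hsub]
    exact congrArg Neg.neg (integral_congr fun r _ => by ring_nf)
  rw [hrefl, abs_neg, abs_of_neg (sub_neg.2 h), show -(v - u) = 2 * u - v - u by ring]
  refine abs_integral_sub_sq_mul_le_of_lt (by linarith) hm hα hpq hA hB ?_ fun r hr => ?_
  · simpa only [show 2 * u - u = u by ring] using hG.comp_sub_left (2 * u)
  · have ht : (r - u) / (2 * u - v - u) = (2 * u - r - u) / (v - u) := by
      rw [← neg_div_neg_eq]; congr 1 <;> ring
    rw [ht]
    exact hbound (2 * u - r) (by rw [uIcc_of_gt h]; constructor <;> linarith [hr.1, hr.2])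

def AlphaMConvexOn (α m b : ℝ) (g : ℝ → ℝ) : Prop :=
  ∀ x ∈ Icc (0:ℝ) b, ∀ y ∈ Icc (0:ℝ) b, ∀ t ∈ Icc (0:ℝ) 1,
    g (t * x + m * (1 - t) * y) ≤ t ^ α * g x + m * (1 - t ^ α) * g y

theorem AlphaMConvexOn.le_of_mem_uIcc {g : ℝ → ℝ} {α m b x y s : ℝ}
    (hg : AlphaMConvexOn α m b g) (hx : x ∈ Icc 0 b) (hy : y ∈ Icc 0 b) (hxy : m * y ≠ x)
    (hs : s ∈ uIcc (m * y) x) :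
    g s ≤ ((s - m * y) / (x - m * y)) ^ α * g x +
      m * (1 - ((s - m * y) / (x - m * y)) ^ α) * g y := by
  have hd : x - m * y ≠ 0 := sub_ne_zero.2 hxy.symm
  have ht : (s - m * y) / (x - m * y) ∈ Icc (0:ℝ) 1 := by
    rcases hxy.lt_or_gt with h | h
    · rw [uIcc_of_lt h] at hs
      exact ⟨div_nonneg (by linarith [hs.1]) (by linarith),
        (div_le_one (by linarith)).2 (by linarith [hs.2])⟩
    · rw [uIcc_of_gt h] at hs
      exact ⟨div_nonneg_of_nonpos (by linarith [hs.2]) (by linarith),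
        (div_le_one_of_neg (by linarith)).2 (by linarith [hs.1])⟩
  have hpt : (s - m * y) / (x - m * y) * x + m * (1 - (s - m * y) / (x - m * y)) * y = s := by
    field_simp
    ring
  simpa only [hpt] using hg x hx y hy _ ht

theorem AlphaMConvexOn.abs_integral_sub_sq_mul_le {G : ℝ → ℝ} {α m b p q x y : ℝ}
    (hg : AlphaMConvexOn α m b fun z => |G z| ^ q) (hm : 0 ≤ m) (hα : 0 ≤ α)
    (hpq : p.HolderConjugate q) (hx : x ∈ Icc 0 b) (hy : y ∈ Icc 0 b) (hxy : m * y ≠ x)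
    (hG : IntervalIntegrable G volume (m * y) x) :
    |∫ s in (m * y)..x, (s - m * y) ^ 2 / 2 * G s| ≤
      |x - m * y| ^ 3 / 2 * (1 / (2 * p + 1)) ^ (1 / p) *
        ((|G x| ^ q + α * m * |G y| ^ q) / (α + 1)) ^ (1 / q) :=
  abs_integral_sub_sq_mul_le_of_ne hxy hm hα hpq (by positivity) (by positivity) hG
    fun _ hs => hg.le_of_mem_uIcc hx hy hxy hs

theorem integral_sub_sq_div_two_mul_eq {f f' f'' : ℝ → ℝ} {x y : ℝ}
    (hf' : ∀ s ∈ uIcc x y, HasDerivAt f (f' s) s)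
    (hf'' : ∀ s ∈ uIcc x y, HasDerivAt f' (f'' s) s)
    (hint : IntervalIntegrable f'' volume x y) :
    ∫ s in x..y, (s - x) ^ 2 / 2 * f'' s =
      (y - x) ^ 2 / 2 * f' y - (y - x) * f y + ∫ s in x..y, f s := by
  have hf'int : IntervalIntegrable f' volume x y :=
    ContinuousOn.intervalIntegrable fun s hs => (hf'' s hs).continuousAt.continuousWithinAt
  have hibp₁ := integral_mul_deriv_eq_deriv_mul (u := fun s => (s - x) ^ 2 / 2)
    (fun s _ => by simpa using (((hasDerivAt_id s).sub_const x).pow 2).div_const 2)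
    hf'' ((by fun_prop : Continuous fun s => s - x).intervalIntegrable x y) hint
  have hibp₂ := integral_mul_deriv_eq_deriv_mul (u := fun s => s - x) (u' := fun _ => 1)
    (fun s _ => (hasDerivAt_id s).sub_const x) hf' intervalIntegrable_const hf'int
  simp only [sub_self, one_mul, zero_mul, zero_pow two_ne_zero, zero_div, sub_zero]
    at hibp₁ hibp₂
  rw [hibp₁, hibp₂]
  ring

theorem integral_sub_mul_midpoint_eq {f f' f'' : ℝ → ℝ} {a c : ℝ}
    (hf' : ∀ s ∈ uIcc a c, HasDerivAt f (f' s) s)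
    (hf'' : ∀ s ∈ uIcc a c, HasDerivAt f' (f'' s) s)
    (hint : IntervalIntegrable f'' volume a c) :
    (∫ s in a..c, f s) - (c - a) * f ((a + c) / 2) =
      (∫ s in a..(a + c) / 2, (s - a) ^ 2 / 2 * f'' s) -
        ∫ s in c..(a + c) / 2, (s - c) ^ 2 / 2 * f'' s := by
  have hM : (a + c) / 2 ∈ uIcc a c := by
    rcases le_total a c with h | h
    · rw [uIcc_of_le h]; constructor <;> linarith
    · rw [uIcc_of_ge h]; constructor <;> linarith
  have hsubL : uIcc a ((a + c) / 2) ⊆ uIcc a c := uIcc_subset_uIcc left_mem_uIcc hM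
  have hsubR : uIcc c ((a + c) / 2) ⊆ uIcc a c := uIcc_subset_uIcc right_mem_uIcc hM
  have hfint : IntervalIntegrable f volume a c :=
    ContinuousOn.intervalIntegrable fun s hs => (hf' s hs).continuousAt.continuousWithinAt
  rw [integral_sub_sq_div_two_mul_eq (fun s hs => hf' s (hsubL hs)) (fun s hs => hf'' s (hsubL hs))
      (hint.mono_set hsubL),
    integral_sub_sq_div_two_mul_eq (fun s hs => hf' s (hsubR hs)) (fun s hs => hf'' s (hsubR hs))
      (hint.mono_set hsubR),
    ← integral_add_adjacent_intervals (hfint.mono_set hsubL) (hfint.mono_set hsubR).symm,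
    integral_symm c ((a + c) / 2)]
  ring

theorem abs_midpoint_sub_average_le {f f' f'' : ℝ → ℝ} {a c KL KR : ℝ} (hac : a < c)
    (hf' : ∀ s ∈ Icc a c, HasDerivAt f (f' s) s)
    (hf'' : ∀ s ∈ Icc a c, HasDerivAt f' (f'' s) s)
    (hint : IntervalIntegrable f'' volume a c)
    (hL : |∫ s in a..(a + c) / 2, (s - a) ^ 2 / 2 * f'' s| ≤ KL)
    (hR : |∫ s in c..(a + c) / 2, (s - c) ^ 2 / 2 * f'' s| ≤ KR) :
    |f ((a + c) / 2) - (1 / (c - a)) * ∫ u in a..c, f u| ≤ (KL + KR) / (c - a) := by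
  have hd : 0 < c - a := sub_pos.2 hac
  have hid := integral_sub_mul_midpoint_eq (fun s hs => hf' s (uIcc_of_lt hac ▸ hs))
    (fun s hs => hf'' s (uIcc_of_lt hac ▸ hs)) hint
  calc |f ((a + c) / 2) - (1 / (c - a)) * ∫ u in a..c, f u|
      = |((∫ s in a..(a + c) / 2, (s - a) ^ 2 / 2 * f'' s) -
          ∫ s in c..(a + c) / 2, (s - c) ^ 2 / 2 * f'' s) / (c - a)| := by
        rw [← hid, abs_sub_comm]
        congr 1
        field_simp
    _ ≤ (KL + KR) / (c - a) := by
        rw [abs_div, abs_of_pos hd]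
        gcongr
        exact (abs_sub _ _).trans (add_le_add hL hR)

theorem stmt_19_general (f f' f'' : ℝ → ℝ) (a b m α q p : ℝ)
    (hm0 : 0 < m) (hm1 : m ≤ 1) (ha : 0 ≤ a) (hab : a < m * b)
    (hα0 : 0 ≤ α) (hq : 1 < q) (hpq : p = q / (q - 1))
    (hf' : ∀ u ∈ Set.Icc a (m * b), HasDerivAt f (f' u) u)
    (hf'' : ∀ u ∈ Set.Icc a (m * b), HasDerivAt f' (f'' u) u)
    (hint : IntervalIntegrable f'' MeasureTheory.volume a (m * b))
    (hconv : ∀ x ∈ Set.Icc (0:ℝ) b, ∀ y ∈ Set.Icc (0:ℝ) b, ∀ t ∈ Set.Icc (0:ℝ) 1,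
      |f'' (t * x + m * (1 - t) * y)| ^ q ≤
        t ^ α * |f'' x| ^ q + m * (1 - t ^ α) * |f'' y| ^ q) :
    |f ((a + m * b) / 2) - (1 / (m * b - a)) * ∫ u in a..(m * b), f u| ≤
      (m * b - a) ^ 2 / 16 * (1 / (2 * p + 1)) ^ (1 / p) *
        (((|f'' ((a + m * b) / 2)| ^ q + α * m * |f'' (a / m)| ^ q) / (α + 1)) ^ (1 / q)
          + ((|f'' ((a + m * b) / 2)| ^ q + α * m * |f'' b| ^ q) / (α + 1)) ^ (1 / q)) := by
  have hpq' : p.HolderConjugate q := hpq ▸ (Real.HolderConjugate.conjExponent hq).symm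
  have hg : AlphaMConvexOn α m b fun z => |f'' z| ^ q := hconv
  have hma : m * (a / m) = a := mul_div_cancel₀ a hm0.ne'
  have hM : (a + m * b) / 2 ∈ Icc 0 b := ⟨by linarith, by nlinarith⟩
  have hsub : ∀ x ∈ uIcc a (m * b), uIcc x ((a + m * b) / 2) ⊆ uIcc a (m * b) := fun x hx =>
    uIcc_subset_uIcc hx (by rw [uIcc_of_lt hab]; constructor <;> linarith)
  have hL := hg.abs_integral_sub_sq_mul_le hm0.le hα0 hpq' hM
    ⟨div_nonneg ha hm0.le, (div_le_iff₀ hm0).2 (by nlinarith)⟩ (by rw [hma]; linarith)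
    (by rw [hma]; exact hint.mono_set (hsub a left_mem_uIcc))
  have hR := hg.abs_integral_sub_sq_mul_le hm0.le hα0 hpq' hM ⟨by nlinarith, le_rfl⟩
    (by linarith) (hint.mono_set (hsub (m * b) right_mem_uIcc))
  rw [hma] at hL
  have hd : 0 < m * b - a := sub_pos.2 hab
  refine (abs_midpoint_sub_average_le hab hf' hf'' hint hL hR).trans_eq ?_
  rw [abs_of_pos (by linarith : 0 < (a + m * b) / 2 - a),
    abs_of_neg (by linarith : (a + m * b) / 2 - m * b < 0)]
  field_simp
  ring

theorem stmt_19 (f f' f'' : ℝ → ℝ) (a b m α q p : ℝ)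
    (hm0 : 0 < m) (hm1 : m ≤ 1) (ha : 0 ≤ a) (hab : a < m * b)
    (hα0 : 0 ≤ α) (hα1 : α ≤ 1) (hq : 1 < q) (hpq : p = q / (q - 1))
    (hf' : ∀ u ∈ Set.Icc a (m * b), HasDerivAt f (f' u) u)
    (hf'' : ∀ u ∈ Set.Icc a (m * b), HasDerivAt f' (f'' u) u)
    (hint : IntervalIntegrable f'' MeasureTheory.volume a (m * b))
    (hconv : ∀ x ∈ Set.Icc (0:ℝ) b, ∀ y ∈ Set.Icc (0:ℝ) b, ∀ t ∈ Set.Icc (0:ℝ) 1,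
      |f'' (t * x + m * (1 - t) * y)| ^ q ≤
        t ^ α * |f'' x| ^ q + m * (1 - t ^ α) * |f'' y| ^ q) :
    |f ((a + m * b) / 2) - (1 / (m * b - a)) * ∫ u in a..(m * b), f u| ≤
      (m * b - a) ^ 2 / 16 * (1 / (2 * p + 1)) ^ (1 / p) *
        (((|f'' ((a + m * b) / 2)| ^ q + α * m * |f'' (a / m)| ^ q) / (α + 1)) ^ (1 / q)
          + ((|f'' ((a + m * b) / 2)| ^ q + α * m * |f'' b| ^ q) / (α + 1)) ^ (1 / q)) :=
  stmt_19_general f f' f'' a b m α q p hm0 hm1 ha hab hα0 hq hpq hf' hf'' hint hconv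
end
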